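/- arXiv:2602.21859 — 10 statements merged into one kernel-verified Lean document; each statement's English description precedes it below -/
import Mathlib

section
/- Let G be a graph and let P = (v_1, ..., v_r) be a longest path in G. Then no connected component D of G − V(P) is adjacent to two consecutive vertices v_i, v_{i+1} of P. -/
/-!
Insert a path of the component between `vᵢ` and `vᵢ₊₁`: if `a ~ vᵢ` and `b ~ vᵢ₊₁` with `a`, `b`
joined by a path `Q` avoiding `P`, then `v₁ … vᵢ Q vᵢ₊₁ … v_r` is a path on more than `r` vertices.
-/

/-- `G` contains a path on `r` vertices, witnessed by an injective `f : Fin r → V`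
with consecutive vertices adjacent. -/
def IsPathEmb {V : Type*} (G : SimpleGraph V) (r : ℕ) (f : Fin r → V) : Prop :=
  Function.Injective f ∧
    ∀ (i : ℕ) (hi : i + 1 < r), G.Adj (f ⟨i, Nat.lt_of_succ_lt hi⟩) (f ⟨i + 1, hi⟩)

/-- `G` contains the path `P_r` on `r` vertices as a subgraph. -/
def ContainsPathOn {V : Type*} (G : SimpleGraph V) (r : ℕ) : Prop :=
  ∃ f : Fin r → V, IsPathEmb G r f

section

open List

variable {α V : Type*}

namespace List

theorem Nodup.append_insert {L₁ M L₃ : List α} (hL : (L₁ ++ L₃).Nodup) (hM : M.Nodup)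
    (hdisj : ∀ x ∈ M, x ∉ L₁ ++ L₃) : (L₁ ++ (M ++ L₃)).Nodup :=
  (perm_append_comm_assoc _ _ _).nodup_iff.2 <|
    nodup_append.2 ⟨hM, hL, fun x hx _ hy hxy => hdisj x hx (hxy ▸ hy)⟩

theorem IsChain.append_insert {R : α → α → Prop} {L₁ M L₃ : List α}
    (hL : IsChain R (L₁ ++ L₃)) (hM : IsChain R M)
    (h₁ : ∀ x ∈ L₁.getLast?, ∀ y ∈ M.head?, R x y)
    (h₃ : ∀ x ∈ M.getLast?, ∀ y ∈ L₃.head?, R x y) : IsChain R (L₁ ++ (M ++ L₃)) := by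
  obtain ⟨hL₁, hL₃, hL₁₃⟩ := isChain_append.1 hL
  refine isChain_append.2 ⟨hL₁, isChain_append.2 ⟨hM, hL₃, h₃⟩, ?_⟩
  cases M with
  | nil => simpa using hL₁₃
  | cons m M => simpa using h₁

end List

theorem containsPathOn_of_list {G : SimpleGraph V} {L : List V} (hnd : L.Nodup)
    (hch : L.IsChain G.Adj) : ContainsPathOn G L.length :=
  ⟨L.get, nodup_iff_injective_get.1 hnd, fun i hi => isChain_iff_getElem.1 hch i hi⟩

theorem ContainsPathOn.mono {G : SimpleGraph V} {m n : ℕ} (h : ContainsPathOn G n)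
    (hmn : m ≤ n) : ContainsPathOn G m := by
  obtain ⟨f, hinj, hadj⟩ := h
  exact ⟨f ∘ Fin.castLE hmn, hinj.comp (Fin.castLE_injective hmn),
    fun i hi => hadj i (lt_of_lt_of_le hi hmn)⟩

namespace IsPathEmb

variable {G : SimpleGraph V} {r : ℕ} {f : Fin r → V}

theorem nodup_ofFn (h : IsPathEmb G r f) : (ofFn f).Nodup :=
  List.nodup_ofFn.2 h.1

theorem isChain_ofFn (h : IsPathEmb G r f) : (ofFn f).IsChain G.Adj :=
  isChain_iff_getElem.2 fun i hi => by
    simpa using h.2 i (by simpa using hi)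

end IsPathEmb

theorem SimpleGraph.Reachable.exists_list_induce {G : SimpleGraph V} {S : Set V} {a b : S}
    (h : (G.induce S).Reachable a b) :
    ∃ M : List V, M.Nodup ∧ M.IsChain G.Adj ∧ (∀ x ∈ M, x ∈ S) ∧
      M.head? = some (a : V) ∧ M.getLast? = some (b : V) := by
  obtain ⟨p, hp⟩ := h.exists_isPath
  refine ⟨p.support.map Subtype.val, hp.support_nodup.map Subtype.val_injective,
    (isChain_map _).2 p.isChain_adj_support, fun x hx => ?_, ?_, ?_⟩
  · obtain ⟨y, -, rfl⟩ := mem_map.1 hx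
    exact y.2
  · rw [head?_map, ← p.cons_tail_support]
    rfl
  · rw [getLast?_map, getLast?_eq_some_getLast p.support_ne_nil, p.getLast_support]
    rfl

end

/-- If `P = (v_1, …, v_r)` is a longest path in `G` (no path on `r+1` vertices exists),
then no connected component of `G − V(P)` is adjacent to two consecutive vertices of `P`:
if `a` and `b` lie in the same component of `G − V(P)`, they cannot be adjacent to `v_i`
and `v_{i+1}` respectively. -/
theorem stmt1 {V : Type*} (G : SimpleGraph V) (r : ℕ) (f : Fin r → V)
    (hP : IsPathEmb G r f) (hlong : ¬ ContainsPathOn G (r + 1))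
    (S : Set V) (hS : S = (Set.range f)ᶜ)
    (a b : S) (hab : (G.induce S).Reachable a b)
    (i : ℕ) (hi : i + 1 < r) :
    ¬ (G.Adj (a : V) (f ⟨i, Nat.lt_of_succ_lt hi⟩) ∧ G.Adj (b : V) (f ⟨i + 1, hi⟩)) := by
  rintro ⟨ha, hb⟩
  obtain ⟨M, hMnd, hMch, hMS, hMa, hMb⟩ := hab.exists_list_induce
  have hsplit := (List.ofFn f).take_append_drop (i + 1)
  have hdisj : ∀ x ∈ M, x ∉ (List.ofFn f).take (i + 1) ++ (List.ofFn f).drop (i + 1) := by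
    intro x hx hxP
    subst hS
    exact hMS x hx (by simpa [hsplit] using hxP)
  have hnd := (hsplit ▸ hP.nodup_ofFn).append_insert hMnd hdisj
  have hch := (hsplit ▸ hP.isChain_ofFn).append_insert hMch
    (by simp [List.getLast?_take, hMa, Nat.lt_of_succ_lt hi, ha.symm])
    (by simp [hMb, hi, hb])
  refine hlong ((containsPathOn_of_list hnd hch).mono ?_)
  have hMpos : 0 < M.length := List.length_pos_of_ne_nil (by rintro rfl; simp at hMa)
  simp only [List.length_append, List.length_take, List.length_drop, List.length_ofFn]
  omega
end

section
/- Let (G,T,k) be an instance of Steiner Forest, and let x, y be two vertices of G with N(x) strictly contained in N(y), where x does not occur in any terminal pair of T. Then (G,T,k) is a yes-instance if and only if (G − x, T, k) is a yes-instance. -/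
/-!
A solution of `(G - x, T, k)` is a solution of `(G, T, k)`. Conversely, since `N(x) ⊆ N(y)` and
`x ≠ y`, the map fixing every vertex but `x` and sending `x` to `y` takes edges of `G` to edges of
`G - x`; the image of a solution of `(G, T, k)` has no more edges, images of walks are walks, and
the terminal pairs, which avoid `x`, are fixed.
-/

/-- `(G, T, k)` is a yes-instance of Steiner Forest: there is a subgraph `F` of `G`
with at most `k` edges such that every terminal pair of `T` lies in one component of `F`. -/
def SFYes {V : Type*} (G : SimpleGraph V) (T : Set (V × V)) (k : ℕ) : Prop :=
  ∃ F : SimpleGraph V, F ≤ G ∧ F.edgeSet.Finite ∧ F.edgeSet.ncard ≤ k ∧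
    ∀ p ∈ T, F.Reachable p.1 p.2

namespace SimpleGraph

variable {V W : Type*}

/-- The image of `F` under an arbitrary map; edges whose ends are identified disappear. -/
def pushforward (f : V → W) (F : SimpleGraph V) : SimpleGraph W :=
  fromEdgeSet (Sym2.map f '' F.edgeSet)

variable {f : V → W} {F : SimpleGraph V}

theorem edgeSet_pushforward_subset : (F.pushforward f).edgeSet ⊆ Sym2.map f '' F.edgeSet := by
  rw [pushforward, edgeSet_fromEdgeSet]
  exact Set.sdiff_subset

theorem pushforward_le {H : SimpleGraph W}
    (hf : ∀ a b, F.Adj a b → f a ≠ f b → H.Adj (f a) (f b)) : F.pushforward f ≤ H := by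
  rw [← edgeSet_subset_edgeSet, pushforward, edgeSet_fromEdgeSet]
  rintro _ ⟨⟨e, he, rfl⟩, hdiag⟩
  induction e using Sym2.ind with
  | _ a b => exact hf a b he (by simpa using hdiag)

theorem Reachable.pushforward {u v : V} (h : F.Reachable u v) (f : V → W) :
    (F.pushforward f).Reachable (f u) (f v) := by
  obtain ⟨w⟩ := h
  induction w with
  | nil => rfl
  | @cons a b _ hab _ ih =>
    refine Reachable.trans ?_ ih
    by_cases hfab : f a = f b
    · rw [hfab]
    · exact Adj.reachable ((fromEdgeSet_adj _).2 ⟨⟨s(a, b), hab, rfl⟩, hfab⟩)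

theorem adj_update_id_of_neighborSet_subset {G : SimpleGraph V} [DecidableEq V] {x y a b : V}
    (hxy : G.neighborSet x ⊆ G.neighborSet y) (hab : G.Adj a b) :
    G.Adj (Function.update id x y a) (Function.update id x y b) := by
  rcases eq_or_ne a x with rfl | ha
  · rw [Function.update_self, Function.update_of_ne hab.ne.symm]
    exact hxy hab
  rcases eq_or_ne b x with rfl | hb
  · rw [Function.update_self, Function.update_of_ne ha]
    exact (hxy hab.symm).symm
  · rwa [Function.update_of_ne ha, Function.update_of_ne hb]

end SimpleGraph

open SimpleGraph

theorem SFYes.of_map {V W : Type*} {G : SimpleGraph V} {H : SimpleGraph W} {T : Set (V × V)}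
    {S : Set (W × W)} {k : ℕ} (f : V → W)
    (hf : ∀ a b, G.Adj a b → f a ≠ f b → H.Adj (f a) (f b)) (hS : S ⊆ Prod.map f f '' T) :
    SFYes G T k → SFYes H S k := by
  rintro ⟨F, hFG, hfin, hcard, hreach⟩
  have hsub := edgeSet_pushforward_subset (f := f) (F := F)
  refine ⟨F.pushforward f, pushforward_le fun a b hab => hf a b (hFG hab),
    (hfin.image _).subset hsub,
    ((Set.ncard_le_ncard hsub (hfin.image _)).trans (Set.ncard_image_le hfin)).trans hcard, ?_⟩
  intro q hq
  obtain ⟨p, hp, rfl⟩ := hS hq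
  exact (hreach p hp).pushforward f

/-- If `N(x) ⊊ N(y)` and `x` occurs in no terminal pair, then `(G,T,k)` is a yes-instance
iff `(G − x, T, k)` is a yes-instance. -/
theorem stmt3 {V : Type*} (G : SimpleGraph V) (T : Set (V × V)) (k : ℕ)
    (x y : V) (hxy : G.neighborSet x ⊂ G.neighborSet y)
    (hx : ∀ p ∈ T, p.1 ≠ x ∧ p.2 ≠ x) :
    SFYes G T k ↔
      SFYes (G.induce {v : V | v ≠ x})
        {p : {v : V // v ≠ x} × {v : V // v ≠ x} | ((p.1 : V), (p.2 : V)) ∈ T} k := by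
  classical
  have hyx : y ≠ x := by
    rintro rfl
    exact ssubset_irrefl _ hxy
  have hmerge : ∀ v, Function.update id x y v ≠ x := fun v => by
    rcases eq_or_ne v x with rfl | hv
    · rwa [Function.update_self]
    · rwa [Function.update_of_ne hv]
  constructor
  · refine SFYes.of_map (fun v => ⟨_, hmerge v⟩)
      (fun a b hab _ => adj_update_id_of_neighborSet_subset hxy.subset hab) ?_
    rintro ⟨a, b⟩ hab
    exact ⟨(a, b), hab, by simp [Function.update_of_ne a.2, Function.update_of_ne b.2]⟩
  · refine SFYes.of_map Subtype.val (fun a b hab _ => hab) ?_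
    intro p hp
    exact ⟨(⟨p.1, (hx p hp).1⟩, ⟨p.2, (hx p hp).2⟩), hp, rfl⟩
end

section
/- Let (G,T,k) be an instance of Steiner Forest and let xy be an edge of G such that (x,y) is a terminal pair in T. Let G' be the graph obtained from G by identifying x and y (contracting the edge xy), and let T' be obtained from T by removing the pair (x,y) and replacing every occurrence of x or y in the remaining pairs by the new identified vertex. Then (G,T,k) is a yes-instance if and only if (G',T',k−1) is a yes-instance. -/
/-- The graph obtained from `G` by identifying `x` and `y` (contracting towards `x`):
the vertex `y` is removed, and `x` inherits all neighbours of `y`. -/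
def contractGraph {V : Type*} (G : SimpleGraph V) (x y : V) :
    SimpleGraph {v : V // v ≠ y} where
  Adj a b := (a : V) ≠ (b : V) ∧
    (G.Adj a b ∨ ((a : V) = x ∧ G.Adj y b) ∨ ((b : V) = x ∧ G.Adj (a : V) y))
  symm := by
    constructor
    rintro a b ⟨hne, h⟩
    refine ⟨hne.symm, ?_⟩
    rcases h with h | h | h
    · exact Or.inl h.symm
    · exact Or.inr (Or.inr ⟨h.1, h.2.symm⟩)
    · exact Or.inr (Or.inl ⟨h.1, h.2.symm⟩)
  loopless := ⟨fun a h => h.1 rfl⟩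

/-!
Forward direction: an `x`–`y` path of a solution starts with some edge `xu`; trading `xu` for
`xy` keeps every terminal pair connected, and contracting `xy` then saves one edge.
Backward direction: lift every edge of a solution of the contracted instance to one preimage
edge of `G` and add `xy`; as `x` and `y` are now adjacent, every vertex is connected to its
image under the contraction, so every terminal pair stays connected.
-/

open SimpleGraph

theorem SimpleGraph.Reachable.lift {V W : Type*} {G : SimpleGraph V} {H : SimpleGraph W}
    (f : V → W) (hf : ∀ a b, G.Adj a b → H.Reachable (f a) (f b)) {u v : V}
    (h : G.Reachable u v) : H.Reachable (f u) (f v) := by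
  simp only [reachable_iff_reflTransGen] at hf h ⊢
  exact Relation.ReflTransGen.lift' f hf u v h

/-- Replacing the first edge `xu` of an `x`–`y` path by `xy` loses no connectivity, since `u`
still reaches `y` along the rest of the path. -/
theorem SimpleGraph.exists_adj_of_reachable {V : Type*} {F : SimpleGraph V} {x y : V}
    (hxy : x ≠ y) (hr : F.Reachable x y) (hfin : F.edgeSet.Finite) :
    ∃ F₂ ≤ F ⊔ edge x y, F₂.Adj x y ∧ F₂.edgeSet.Finite ∧
      F₂.edgeSet.ncard ≤ F.edgeSet.ncard ∧ ∀ a b, F.Reachable a b → F₂.Reachable a b := by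
  obtain ⟨p, hp⟩ := hr.exists_isPath
  cases p with
  | nil => exact absurd rfl hxy
  | @cons _ u _ hxu p =>
    obtain ⟨-, hx⟩ := (Walk.cons_isPath_iff hxu p).1 hp
    set F₂ := F.deleteEdges {s(x, u)} ⊔ edge x y
    have hxyF₂ : F₂.Adj x y := Or.inr ((edge_adj ..).2 ⟨Or.inl ⟨rfl, rfl⟩, hxy⟩)
    have hedges : F₂.edgeSet = insert s(x, y) (F.edgeSet \ {s(x, u)}) := by
      rw [edgeSet_sup, edgeSet_deleteEdges, edgeSet_edge_of_ne hxy, Set.union_singleton]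
    have hux : F₂.Reachable u x :=
      ((p.toDeleteEdge _ fun h => hx (p.fst_mem_support_of_mem_edges h)).reachable.mono
        le_sup_left).trans hxyF₂.reachable.symm
    refine ⟨F₂, sup_le_sup_right (F.deleteEdges_le _) _, hxyF₂, ?_, ?_, ?_⟩
    · rw [hedges]
      exact hfin.sdiff.insert _
    · rw [hedges, ← Set.ncard_sdiff_singleton_add_one (F.mem_edgeSet.2 hxu) hfin]
      exact Set.ncard_insert_le _ _
    · refine fun a b h => h.lift id fun c d hcd => ?_
      by_cases he : s(c, d) = s(x, u)
      · rcases Sym2.eq_iff.1 he with ⟨rfl, rfl⟩ | ⟨rfl, rfl⟩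
        exacts [hux.symm, hux]
      · exact Adj.reachable (G := F₂) (Or.inl (deleteEdges_adj.2 ⟨hcd, he⟩))

section Contraction

variable {V : Type*} {x y : V}

open Classical in
noncomputable def contractProj (hxy : x ≠ y) (v : V) : {v : V // v ≠ y} :=
  if h : v = y then ⟨x, hxy⟩ else ⟨v, h⟩

@[simp]
theorem contractProj_self (hxy : x ≠ y) : contractProj hxy y = ⟨x, hxy⟩ := dif_pos rfl

theorem contractProj_of_ne (hxy : x ≠ y) {v : V} (h : v ≠ y) : contractProj hxy v = ⟨v, h⟩ :=
  dif_neg h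

@[simp]
theorem contractProj_coe (hxy : x ≠ y) (a : {v : V // v ≠ y}) : contractProj hxy a = a :=
  contractProj_of_ne hxy a.2

open Classical in
theorem coe_contractProj (hxy : x ≠ y) (v : V) :
    (contractProj hxy v : V) = if v = y then x else v := by
  by_cases h : v = y
  · simp [h]
  · simp [contractProj_of_ne hxy h, h]

theorem contractGraph_mono {F G : SimpleGraph V} (h : F ≤ G) :
    contractGraph F x y ≤ contractGraph G x y := by
  rintro a b ⟨hne, hab | ⟨ha, hb⟩ | ⟨hb, ha⟩⟩
  exacts [⟨hne, Or.inl (h hab)⟩, ⟨hne, Or.inr (Or.inl ⟨ha, h hb⟩)⟩,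
    ⟨hne, Or.inr (Or.inr ⟨hb, h ha⟩)⟩]

theorem SimpleGraph.Reachable.contractGraph (hxy : x ≠ y) {F : SimpleGraph V} {a b : V}
    (h : F.Reachable a b) :
    (contractGraph F x y).Reachable (contractProj hxy a) (contractProj hxy b) := by
  refine h.lift _ fun c d hcd => ?_
  by_cases he : contractProj hxy c = contractProj hxy d
  · rw [he]
  refine Adj.reachable ⟨fun h => he (Subtype.ext h), ?_⟩
  by_cases hc : c = y
  · subst hc
    simpa [contractProj_of_ne hxy hcd.ne.symm] using Or.inr (Or.inl hcd)
  by_cases hd : d = y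
  · subst hd
    simpa [contractProj_of_ne hxy hc] using Or.inr (Or.inr hcd)
  simpa [contractProj_of_ne hxy hc, contractProj_of_ne hxy hd] using Or.inl hcd

theorem edgeSet_contractGraph_subset (hxy : x ≠ y) (F : SimpleGraph V) :
    (contractGraph F x y).edgeSet ⊆ Sym2.map (contractProj hxy) '' (F.edgeSet \ {s(x, y)}) := by
  intro e he
  induction e using Sym2.ind with
  | _ a b =>
  obtain ⟨hne, hab | ⟨ha, hb⟩ | ⟨hb, ha⟩⟩ := he
  · refine ⟨s(a, b), ⟨hab, ?_⟩, by simp⟩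
    simp only [Set.mem_singleton_iff, Sym2.eq_iff]
    rintro (⟨-, h⟩ | ⟨h, -⟩)
    exacts [b.2 h, a.2 h]
  · refine ⟨s(y, b), ⟨hb, ?_⟩, ?_⟩
    · simp only [Set.mem_singleton_iff, Sym2.eq_iff]
      rintro (⟨h, -⟩ | ⟨-, h⟩)
      exacts [hxy h.symm, hne (ha.trans h.symm)]
    · rw [Sym2.map_mk, contractProj_self, contractProj_coe,
        show (⟨x, hxy⟩ : {v : V // v ≠ y}) = a from Subtype.ext ha.symm]
  · refine ⟨s(a, y), ⟨ha, ?_⟩, ?_⟩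
    · simp only [Set.mem_singleton_iff, Sym2.eq_iff]
      rintro (⟨h, -⟩ | ⟨h, -⟩)
      exacts [hne (h.trans hb.symm), a.2 h]
    · rw [Sym2.map_mk, contractProj_self, contractProj_coe,
        show (⟨x, hxy⟩ : {v : V // v ≠ y}) = b from Subtype.ext hb.symm]

theorem edgeSet_contractGraph_finite (hxy : x ≠ y) {F : SimpleGraph V}
    (hfin : F.edgeSet.Finite) :
    (contractGraph F x y).edgeSet.Finite :=
  (hfin.sdiff.image _).subset (edgeSet_contractGraph_subset hxy F)

theorem ncard_edgeSet_contractGraph_add_one_le {F : SimpleGraph V} (hF : F.Adj x y)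
    (hfin : F.edgeSet.Finite) :
    (contractGraph F x y).edgeSet.ncard + 1 ≤ F.edgeSet.ncard := by
  rw [← Set.ncard_sdiff_singleton_add_one (F.mem_edgeSet.2 hF) hfin, Nat.add_le_add_iff_right]
  exact (Set.ncard_le_ncard (edgeSet_contractGraph_subset hF.ne F) (hfin.sdiff.image _)).trans
    (Set.ncard_image_le hfin.sdiff)

theorem reachable_contractProj {F : SimpleGraph V} (hF : F.Adj x y) (v : V) :
    F.Reachable v (contractProj hF.ne v) := by
  by_cases h : v = y
  · subst h
    simpa using hF.reachable.symm
  · rw [contractProj_of_ne hF.ne h]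

/-- The lift takes one `G`-preimage of each edge of `F'`, together with `xy`. -/
theorem exists_lift_of_le_contractGraph {G : SimpleGraph V} {F' : SimpleGraph {v : V // v ≠ y}}
    (hG : G.Adj x y) (hF' : F' ≤ contractGraph G x y) (hfin : F'.edgeSet.Finite) :
    ∃ F ≤ G, F.Adj x y ∧ F.edgeSet.Finite ∧ F.edgeSet.ncard ≤ F'.edgeSet.ncard + 1 ∧
      ∀ a b, F'.Reachable a b → F.Reachable a b := by
  set π := Sym2.map (contractProj hG.ne)
  have himage : π '' (G.edgeSet ∩ π ⁻¹' F'.edgeSet) = F'.edgeSet := by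
    rw [Set.image_inter_preimage, Set.inter_eq_right]
    exact (edgeSet_mono hF').trans ((edgeSet_contractGraph_subset hG.ne G).trans
      (Set.image_mono Set.sdiff_subset))
  obtain ⟨S, hS, hbij⟩ := Set.exists_subset_bijOn (G.edgeSet ∩ π ⁻¹' F'.edgeSet) π
  rw [himage] at hbij
  have hSG : S ⊆ G.edgeSet := fun e he => (hS he).1
  have hSfin : S.Finite := Set.Finite.of_finite_image (hbij.image_eq ▸ hfin) hbij.injOn
  set F := fromEdgeSet (insert s(x, y) S)
  have hxyF : F.Adj x y := (fromEdgeSet_adj _).2 ⟨Set.mem_insert _ _, hG.ne⟩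
  refine ⟨F, ?_, hxyF, ?_, ?_, ?_⟩
  · exact (fromEdgeSet_le G).2 fun e he => (Set.insert_subset (G.mem_edgeSet.2 hG) hSG) he.1
  · rw [edgeSet_fromEdgeSet]
    exact (hSfin.insert _).sdiff
  · rw [edgeSet_fromEdgeSet, ← hbij.ncard_eq]
    exact (Set.ncard_le_ncard Set.sdiff_subset (hSfin.insert _)).trans (Set.ncard_insert_le _ _)
  · refine fun a b h => h.lift Subtype.val fun a b hab => ?_
    obtain ⟨e, he, hπe⟩ := hbij.surjOn ((mem_edgeSet F').2 hab)
    induction e using Sym2.ind with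
    | _ c d =>
    have hcd : F.Reachable c d :=
      ((fromEdgeSet_adj _).2 ⟨Set.mem_insert_of_mem _ he, G.ne_of_adj (hSG he)⟩).reachable
    have hπ : ∀ v, F.Reachable v (contractProj hG.ne v) := reachable_contractProj hxyF
    rcases Sym2.eq_iff.1 hπe with ⟨rfl, rfl⟩ | ⟨rfl, rfl⟩
    · exact ((hπ c).symm.trans hcd).trans (hπ d)
    · exact ((hπ d).symm.trans hcd.symm).trans (hπ c)

end Contraction

open Classical in
/-- If `xy ∈ E(G)` and `(x,y) ∈ T`, then `(G,T,k)` is a yes-instance iff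
`(G', T', k−1)` is, where `G'` identifies `x` and `y` and `T'` removes the pair `(x,y)`
and replaces every occurrence of `x` or `y` by the identified vertex (represented by `x`). -/
theorem stmt4 {V : Type*} (G : SimpleGraph V) (T : Set (V × V)) (k : ℕ) (hk : 1 ≤ k)
    (x y : V) (hadj : G.Adj x y) (hT : (x, y) ∈ T) :
    SFYes G T k ↔
      SFYes (contractGraph G x y)
        {p : {v : V // v ≠ y} × {v : V // v ≠ y} |
          ∃ q ∈ T, q ≠ (x, y) ∧
            (p.1 : V) = (if q.1 = y then x else q.1) ∧
            (p.2 : V) = (if q.2 = y then x else q.2)}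
        (k - 1) := by
  have hxy : x ≠ y := hadj.ne
  constructor
  · rintro ⟨F, hFG, hfin, hcard, hconn⟩
    obtain ⟨F₂, hF₂, hxyF₂, hfin₂, hcard₂, hreach₂⟩ :=
      exists_adj_of_reachable hxy (hconn _ hT) hfin
    have hF₂G : F₂ ≤ G := hF₂.trans (sup_le hFG ((edge_le_iff G).2 (Or.inr hadj)))
    refine ⟨contractGraph F₂ x y, contractGraph_mono hF₂G, edgeSet_contractGraph_finite hxy hfin₂,
      ?_, ?_⟩
    · have := ncard_edgeSet_contractGraph_add_one_le hxyF₂ hfin₂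
      omega
    · rintro ⟨a, b⟩ ⟨q, hq, -, ha, hb⟩
      obtain rfl : a = contractProj hxy q.1 := Subtype.ext (ha.trans (coe_contractProj hxy _).symm)
      obtain rfl : b = contractProj hxy q.2 := Subtype.ext (hb.trans (coe_contractProj hxy _).symm)
      exact (hreach₂ _ _ (hconn q hq)).contractGraph hxy
  · rintro ⟨F', hF', hfin', hcard', hconn'⟩
    obtain ⟨F, hFG, hxyF, hfin, hcard, hlift⟩ := exists_lift_of_le_contractGraph hadj hF' hfin'
    refine ⟨F, hFG, hfin, by omega, fun q hq => ?_⟩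
    by_cases hqxy : q = (x, y)
    · subst hqxy
      exact hxyF.reachable
    have hq' := hlift _ _ (hconn' (contractProj hxy q.1, contractProj hxy q.2)
      ⟨q, hq, hqxy, coe_contractProj hxy _, coe_contractProj hxy _⟩)
    exact ((reachable_contractProj hxyF q.1).trans hq').trans (reachable_contractProj hxyF q.2).symm
end

section
/- Let G be a graph and let L be a seeded wedge in G with ends x, y that is not juicy, and let a, b be the two vertices of L \ {x,y}. Then ab ∈ E(G) and {a,b} is complete to {x,y} in G, i.e., all four edges ax, ay, bx, by are present in G. -/
universe u

/-- `G` has treewidth at most `k`: there is a tree decomposition all of whose bags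
have at most `k+1` vertices. -/
def HasTreewidthLE {V : Type u} (G : SimpleGraph V) (k : ℕ) : Prop :=
  ∃ (ι : Type u) (t : SimpleGraph ι) (bag : ι → Set V),
    t.Connected ∧ t.IsAcyclic ∧
    (∀ v : V, ∃ i, v ∈ bag i) ∧
    (∀ u v : V, G.Adj u v → ∃ i, u ∈ bag i ∧ v ∈ bag i) ∧
    (∀ v : V, (t.induce {i : ι | v ∈ bag i}).Connected) ∧
    (∀ i : ι, (bag i).Finite ∧ (bag i).ncard ≤ k + 1)

/-- `L` is a wedge in `G` with ends `x`, `y`. -/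
def IsWedge {V : Type u} (G : SimpleGraph V) (L : Set V) (x y : V) : Prop :=
  (∃ a b c : V, a ∈ L ∧ b ∈ L ∧ c ∈ L ∧ a ≠ b ∧ a ≠ c ∧ b ≠ c) ∧
  x ∈ L ∧ y ∈ L ∧ x ≠ y ∧
  {v : V | v ∉ L \ {x, y} ∧ ∃ u ∈ L \ {x, y}, G.Adj u v} = {x, y} ∧
  (G.induce (L \ {x, y})).Connected

/-- The graph `G_L ∪ {xy}`: the induced graph `G[L]` with the edge `xy` added
(removing it first if present and adding it back yields the same graph). -/
def wedgePlus {V : Type u} (G : SimpleGraph V) (L : Set V) (x y : V) :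
    SimpleGraph L where
  Adj a b := (a : V) ≠ (b : V) ∧
    (G.Adj a b ∨ ((a : V) = x ∧ (b : V) = y) ∨ ((a : V) = y ∧ (b : V) = x))
  symm := by
    constructor
    rintro a b ⟨hne, h⟩
    refine ⟨hne.symm, ?_⟩
    rcases h with h | h | h
    · exact Or.inl h.symm
    · exact Or.inr (Or.inr ⟨h.2, h.1⟩)
    · exact Or.inr (Or.inl ⟨h.2, h.1⟩)
  loopless := ⟨fun a h => h.1 rfl⟩

/-!
If `u ≠ v` are non-adjacent in a graph on at most `k + 2` vertices, the two bags `V - u`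
and `V - v`, joined by one tree edge, form a tree decomposition of width `k`: every edge
misses `u` or `v`. Hence if `G_L ∪ {xy}` on the four vertices of a seeded wedge has
treewidth more than `2`, it is `K₄`, and every pair of `L` other than `xy` is already an
edge of `G`.
-/

open SimpleGraph

lemma ncard_compl_singleton {α : Type*} [Finite α] (a : α) :
    ({a}ᶜ : Set α).ncard = Nat.card α - 1 := by
  rw [Set.ncard_compl, Set.ncard_singleton]

lemma hasTreewidthLE_of_not_adj {α : Type u} [Finite α] {k : ℕ} (hcard : Nat.card α ≤ k + 2)
    (G : SimpleGraph α) {u v : α} (huv : u ≠ v) (hnadj : ¬ G.Adj u v) :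
    HasTreewidthLE G k := by
  let bag : ULift Bool → Set α := fun i => if i.down then {u}ᶜ else {v}ᶜ
  have mem_bag_of_ne_u {w : α} (hw : w ≠ u) : w ∈ bag ⟨true⟩ := hw
  have mem_bag_of_ne_v {w : α} (hw : w ≠ v) : w ∈ bag ⟨false⟩ := hw
  have mem_some_bag (w : α) : ∃ i, w ∈ bag i := by
    by_cases hw : w = u
    · exact ⟨⟨false⟩, mem_bag_of_ne_v (hw ▸ huv)⟩
    · exact ⟨⟨true⟩, mem_bag_of_ne_u hw⟩
  refine ⟨ULift Bool, ⊤, bag, connected_top, IsAcyclic.of_card_le_two (by simp),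
    mem_some_bag, ?_, ?_, ?_⟩
  · intro p q hpq
    by_cases hp : p = u
    · subst hp
      exact ⟨⟨false⟩, mem_bag_of_ne_v huv, mem_bag_of_ne_v fun h => hnadj (h ▸ hpq)⟩
    by_cases hq : q = u
    · subst hq
      exact ⟨⟨false⟩, mem_bag_of_ne_v fun h => hnadj (h ▸ hpq.symm), mem_bag_of_ne_v huv⟩
    exact ⟨⟨true⟩, mem_bag_of_ne_u hp, mem_bag_of_ne_u hq⟩
  · intro w
    obtain ⟨i, hi⟩ := mem_some_bag w
    have : Nonempty {i | w ∈ bag i} := ⟨⟨i, hi⟩⟩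
    rw [← completeGraph_eq_top, induce_top]
    exact connected_top
  · rintro ⟨i⟩
    refine ⟨Set.toFinite _, ?_⟩
    cases i <;>
      simp only [bag, Bool.false_eq_true, if_true, if_false, ncard_compl_singleton] <;> omega

lemma adj_of_not_hasTreewidthLE {α : Type u} [Finite α] {k : ℕ} (hcard : Nat.card α ≤ k + 2)
    {G : SimpleGraph α} (hG : ¬ HasTreewidthLE G k) {u v : α} (huv : u ≠ v) : G.Adj u v := by
  by_contra hnadj
  exact hG (hasTreewidthLE_of_not_adj hcard G huv hnadj)

lemma adj_of_wedgePlus_adj {V : Type u} {G : SimpleGraph V} {L : Set V} {x y : V} {u v : L}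
    (hu : (u : V) ∉ ({x, y} : Set V)) (h : (wedgePlus G L x y).Adj u v) : G.Adj u v := by
  obtain ⟨-, hG | ⟨rfl, -⟩ | ⟨rfl, -⟩⟩ := h
  · exact hG
  all_goals simp at hu

/-- If `L` is a seeded wedge (`|L| = 4`) with ends `x, y` that is not juicy, and `a, b`
are the two vertices of `L \ {x,y}`, then `ab ∈ E(G)` and `{a,b}` is complete to
`{x,y}`: all of `ax, ay, bx, by` are edges of `G`. -/
theorem stmt8 {V : Type u} (G : SimpleGraph V) (L : Set V) (x y : V)
    (hw : IsWedge G L x y) (hcard : L.ncard = 4)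
    (hnotjuicy : ¬ HasTreewidthLE (wedgePlus G L x y) 2)
    (a b : V) (ha : a ∈ L) (hb : b ∈ L)
    (ha' : a ∉ ({x, y} : Set V)) (hb' : b ∉ ({x, y} : Set V)) (hab : a ≠ b) :
    G.Adj a b ∧ G.Adj a x ∧ G.Adj a y ∧ G.Adj b x ∧ G.Adj b y := by
  obtain ⟨-, hx, hy, -⟩ := hw
  have : Finite L := (Set.finite_of_ncard_ne_zero (by omega)).to_subtype
  have adj {u v : V} (hu : u ∈ L) (hv : v ∈ L) (hu' : u ∉ ({x, y} : Set V)) (huv : u ≠ v) :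
      G.Adj u v :=
    adj_of_wedgePlus_adj (v := ⟨v, hv⟩) hu' <| adj_of_not_hasTreewidthLE
      (by rw [Nat.card_coe_set_eq, hcard]) hnotjuicy (u := ⟨u, hu⟩) (Subtype.coe_ne_coe.mp huv)
  have ne_of_mem {u v : V} (hu' : u ∉ ({x, y} : Set V)) (hv : v ∈ ({x, y} : Set V)) : u ≠ v :=
    fun h => hu' (h ▸ hv)
  exact ⟨adj ha hb ha' hab, adj ha hx ha' (ne_of_mem ha' (by simp)),
    adj ha hy ha' (ne_of_mem ha' (by simp)), adj hb hx hb' (ne_of_mem hb' (by simp)),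
    adj hb hy hb' (ne_of_mem hb' (by simp))⟩
end

section
/- Let G be a graph containing a juicy citrus with ends x, y and wedge set 𝓛 such that the vesicle set V(x,y,𝓛) equals V(G). Then G has treewidth at most 2. -/
universe u

/-!
By juiciness, each wedge `L` has a tree decomposition of width at most 2 of `G[L] + xy`, so one of
its bags contains both ends. Hanging all these trees from a new node with bag `{x, y}` gives a tree
decomposition of `G`: two wedges share no vertex besides `x, y` (interiors are connected and attach
to the rest of `G` only at the ends), and an edge of `G` with an end outside `{x, y}` stays inside
the wedge containing that end.
-/

namespace SimpleGraph

variable {V : Type*} {G : SimpleGraph V}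

lemma isBridge_of_forall_adj_leaving {S : Set V} {u v : V} (hu : u ∈ S) (hv : v ∉ S)
    (hS : ∀ a b, a ∈ S → b ∉ S → G.Adj a b → s(a, b) = s(u, v)) : G.IsBridge s(u, v) := by
  refine isBridge_iff_forall_walk_mem_edges.mpr fun p => ?_
  obtain ⟨d, hd, ha, hb⟩ := p.exists_boundary_dart S hu hv
  rw [← hS _ _ ha hb d.adj, p.edges_eq_map_darts]
  exact List.mem_map_of_mem hd

variable {Λ : Type*} {ι : Λ → Type*} (t : ∀ L, SimpleGraph (ι L)) (root : ∀ L, ι L)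

inductive StarGlueAdj : Option (Σ L, ι L) → Option (Σ L, ι L) → Prop
  | hub_root (L : Λ) : StarGlueAdj none (some ⟨L, root L⟩)
  | root_hub (L : Λ) : StarGlueAdj (some ⟨L, root L⟩) none
  | inner {L : Λ} {i j : ι L} : (t L).Adj i j → StarGlueAdj (some ⟨L, i⟩) (some ⟨L, j⟩)

/-- The disjoint union of the graphs `t L`, plus a hub vertex `none` joined to every `root L`. -/
def starGlue : SimpleGraph (Option (Σ L, ι L)) where
  Adj := StarGlueAdj t root
  symm := ⟨fun a b h => by
    cases h with
    | hub_root L => exact .root_hub L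
    | root_hub L => exact .hub_root L
    | inner h => exact .inner h.symm⟩
  loopless := ⟨fun a h => by
    cases h with
    | inner h => exact (t _).loopless.irrefl _ h⟩

def starGlueIncl (L : Λ) : t L →g starGlue t root where
  toFun i := some ⟨L, i⟩
  map_rel' h := .inner h

variable {t root}

lemma starGlue_adj_hub_root (L : Λ) : (starGlue t root).Adj none (some ⟨L, root L⟩) := .hub_root L

lemma starGlue_connected (ht : ∀ L, (t L).Preconnected) : (starGlue t root).Connected := by
  refine (connected_iff_exists_forall_reachable _).mpr ⟨none, ?_⟩
  rintro (_ | ⟨L, i⟩)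
  · rfl
  · exact (starGlue_adj_hub_root L).reachable.trans ((ht L (root L) i).map (starGlueIncl t root L))

lemma isBridge_starGlue_root (L : Λ) : (starGlue t root).IsBridge s(some ⟨L, root L⟩, none) := by
  refine isBridge_of_forall_adj_leaving (S := Set.range (starGlueIncl t root L)) ⟨root L, rfl⟩
    (by rintro ⟨i, ⟨⟩⟩) ?_
  rintro _ b ⟨i, rfl⟩ hb hab
  cases hab with
  | root_hub => rfl
  | inner h => exact absurd ⟨_, rfl⟩ hb

/-- The side of `ij` in `t L` avoiding `root L` is cut off from the rest of the star by `ij`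
alone. -/
lemma isBridge_starGlue_inner {L : Λ} {i j : ι L} (hij : (t L).IsBridge s(i, j)) :
    (starGlue t root).IsBridge s(some ⟨L, i⟩, some ⟨L, j⟩) := by
  wlog hi : ¬ ((t L).deleteEdges {s(i, j)}).Reachable i (root L) generalizing i j
  · rw [Sym2.eq_swap] at hij ⊢
    refine this hij fun hj => ?_
    rw [Sym2.eq_swap] at hj
    exact isBridge_iff.mp (Sym2.eq_swap ▸ hij) ((not_not.mp hi).trans hj.symm)
  set C := {k | ((t L).deleteEdges {s(i, j)}).Reachable i k}
  refine isBridge_of_forall_adj_leaving (S := starGlueIncl t root L '' C) ⟨i, .rfl, rfl⟩ ?_ ?_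
  · rintro ⟨k, hk, hkj⟩
    cases hkj
    exact isBridge_iff.mp hij hk
  · rintro _ b ⟨k, hk, rfl⟩ hb hab
    cases hab with
    | root_hub => exact absurd hk hi
    | @inner _ _ l hkl =>
      by_contra hne
      refine hb ⟨l, hk.trans (Adj.reachable (deleteEdges_adj.mpr ⟨hkl, fun h => hne ?_⟩)), rfl⟩
      rcases Sym2.eq_iff.mp (Set.mem_singleton_iff.mp h) with ⟨rfl, rfl⟩ | ⟨rfl, rfl⟩
      · rfl
      · exact Sym2.eq_swap

lemma starGlue_isAcyclic (ht : ∀ L, (t L).IsAcyclic) : (starGlue t root).IsAcyclic := by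
  refine isAcyclic_iff_forall_adj_isBridge.mpr fun a b hab => ?_
  cases hab with
  | hub_root L => exact Sym2.eq_swap ▸ isBridge_starGlue_root L
  | root_hub L => exact isBridge_starGlue_root L
  | inner h => exact isBridge_starGlue_inner (isAcyclic_iff_forall_adj_isBridge.mp (ht _) h)

end SimpleGraph

section TreeDecomposition

open SimpleGraph

variable {V : Type u}

structure IsTreeDecomposition {ι : Type*} (G : SimpleGraph V) (t : SimpleGraph ι)
    (bag : ι → Set V) (k : ℕ) : Prop where
  connected : t.Connected
  isAcyclic : t.IsAcyclic
  exists_mem_bag : ∀ v, ∃ i, v ∈ bag i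
  exists_adj_mem_bag : ∀ u v, G.Adj u v → ∃ i, u ∈ bag i ∧ v ∈ bag i
  induce_connected : ∀ v, (t.induce {i | v ∈ bag i}).Connected
  bag_finite : ∀ i, (bag i).Finite
  ncard_bag_le : ∀ i, (bag i).ncard ≤ k + 1

theorem hasTreewidthLE_iff {G : SimpleGraph V} {k : ℕ} :
    HasTreewidthLE G k ↔
      ∃ (ι : Type u) (t : SimpleGraph ι) (bag : ι → Set V), IsTreeDecomposition G t bag k := by
  constructor
  · rintro ⟨ι, t, bag, hc, ha, hv, he, hi, hb⟩
    exact ⟨ι, t, bag, hc, ha, hv, he, hi, fun i => (hb i).1, fun i => (hb i).2⟩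
  · rintro ⟨ι, t, bag, h⟩
    exact ⟨ι, t, bag, h.connected, h.isAcyclic, h.exists_mem_bag, h.exists_adj_mem_bag,
      h.induce_connected, fun i => ⟨h.bag_finite i, h.ncard_bag_le i⟩⟩

variable {Λ : Type*} {ι : Λ → Type*} {P : Λ → Set V}

def starBag (S : Set V) (bag : ∀ L, ι L → Set (P L)) : Option (Σ L, ι L) → Set V
  | none => S
  | some ⟨L, i⟩ => Subtype.val '' bag L i

variable {S : Set V} {bag : ∀ L, ι L → Set (P L)}

lemma mem_starBag_some {L : Λ} {i : ι L} {v : V} (hv : v ∈ P L) :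
    v ∈ starBag S bag (some ⟨L, i⟩) ↔ ⟨v, hv⟩ ∈ bag L i := by
  simp [starBag, hv]

lemma mem_of_mem_starBag_some {L : Λ} {i : ι L} {v : V}
    (hv : v ∈ starBag S bag (some ⟨L, i⟩)) : v ∈ P L := by
  obtain ⟨w, -, rfl⟩ := hv
  exact w.2

variable {t : ∀ L, SimpleGraph (ι L)} {root : ∀ L, ι L}

lemma reachable_induce_starGlue {v : V} {L : Λ} (hv : v ∈ P L)
    (hconn : ((t L).induce {i | ⟨v, hv⟩ ∈ bag L i}).Preconnected) {i j : ι L}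
    (hi : v ∈ starBag S bag (some ⟨L, i⟩)) (hj : v ∈ starBag S bag (some ⟨L, j⟩)) :
    ((starGlue t root).induce {a | v ∈ starBag S bag a}).Reachable
      ⟨some ⟨L, i⟩, hi⟩ ⟨some ⟨L, j⟩, hj⟩ := by
  let f : (t L).induce {i | ⟨v, hv⟩ ∈ bag L i} →g
      (starGlue t root).induce {a | v ∈ starBag S bag a} :=
    { toFun k := ⟨some ⟨L, k.1⟩, (mem_starBag_some (S := S) hv).mpr k.2⟩
      map_rel' h := .inner h }
  exact (hconn ⟨i, (mem_starBag_some hv).mp hi⟩ ⟨j, (mem_starBag_some hv).mp hj⟩).map f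

lemma preconnected_induce_starGlue {v : V}
    (hconn : ∀ L (hv : v ∈ P L), ((t L).induce {i | ⟨v, hv⟩ ∈ bag L i}).Preconnected)
    (hroot : ∀ L, S ⊆ Subtype.val '' bag L (root L))
    (hunique : ∀ L M, v ∉ S → v ∈ P L → v ∈ P M → L = M) :
    ((starGlue t root).induce {a | v ∈ starBag S bag a}).Preconnected := by
  by_cases hvS : v ∈ S
  · have hub : ∀ a,
        ((starGlue t root).induce {a | v ∈ starBag S bag a}).Reachable ⟨none, hvS⟩ a := by
      rintro ⟨_ | ⟨L, i⟩, ha⟩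
      · rfl
      · have hv := mem_of_mem_starBag_some (S := S) ha
        have hr : v ∈ starBag S bag (some ⟨L, root L⟩) := hroot L hvS
        have hadj : ((starGlue t root).induce {a | v ∈ starBag S bag a}).Adj
            ⟨none, hvS⟩ ⟨some ⟨L, root L⟩, hr⟩ := starGlue_adj_hub_root L
        exact hadj.reachable.trans (reachable_induce_starGlue hv (hconn L hv) hr ha)
    exact fun a b => (hub a).symm.trans (hub b)
  · rintro ⟨_ | ⟨L, i⟩, ha⟩ ⟨_ | ⟨M, j⟩, hb⟩
    · exact absurd ha hvS
    · exact absurd ha hvS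
    · exact absurd hb hvS
    · have hv := mem_of_mem_starBag_some (S := S) ha
      obtain rfl := hunique L M hvS hv (mem_of_mem_starBag_some (S := S) hb)
      exact reachable_induce_starGlue hv (hconn L hv) ha hb

theorem isTreeDecomposition_starGlue {G : SimpleGraph V} {k : ℕ} {H : ∀ L, SimpleGraph (P L)}
    (hdec : ∀ L, IsTreeDecomposition (H L) (t L) (bag L) k)
    (hroot : ∀ L, S ⊆ Subtype.val '' bag L (root L)) (hSfin : S.Finite) (hSk : S.ncard ≤ k + 1)
    (hcover : ∀ v, v ∉ S → ∃ L, v ∈ P L)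
    (hunique : ∀ L M v, v ∉ S → v ∈ P L → v ∈ P M → L = M)
    (hadj : ∀ u v, G.Adj u v → u ∉ S →
      ∃ L, ∃ (hu : u ∈ P L) (hv : v ∈ P L), (H L).Adj ⟨u, hu⟩ ⟨v, hv⟩) :
    IsTreeDecomposition G (starGlue t root) (starBag S bag) k := by
  have hmem : ∀ v, v ∉ S → ∃ a, v ∈ starBag S bag a := fun v hvS => by
    obtain ⟨L, hv⟩ := hcover v hvS
    obtain ⟨i, hi⟩ := (hdec L).exists_mem_bag ⟨v, hv⟩
    exact ⟨some ⟨L, i⟩, (mem_starBag_some hv).mpr hi⟩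
  have hedge : ∀ u v, G.Adj u v → u ∉ S → ∃ a, u ∈ starBag S bag a ∧ v ∈ starBag S bag a := by
    intro u v huv huS
    obtain ⟨L, hu, hv, h⟩ := hadj u v huv huS
    obtain ⟨i, hui, hvi⟩ := (hdec L).exists_adj_mem_bag _ _ h
    exact ⟨some ⟨L, i⟩, (mem_starBag_some hu).mpr hui, (mem_starBag_some hv).mpr hvi⟩
  refine ⟨starGlue_connected fun L => (hdec L).connected.preconnected,
    starGlue_isAcyclic fun L => (hdec L).isAcyclic, fun v => ?_, fun u v huv => ?_, fun v => ?_,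
    ?_, ?_⟩
  · by_cases hvS : v ∈ S
    exacts [⟨none, hvS⟩, hmem v hvS]
  · by_cases huS : u ∈ S
    · by_cases hvS : v ∈ S
      · exact ⟨none, huS, hvS⟩
      · obtain ⟨a, hv, hu⟩ := hedge v u huv.symm hvS
        exact ⟨a, hu, hv⟩
    · exact hedge u v huv huS
  · refine (connected_iff _).mpr ⟨preconnected_induce_starGlue
      (fun L _ => ((hdec L).induce_connected _).preconnected) hroot
      (fun L M hvS => hunique L M v hvS), ?_⟩
    by_cases hvS : v ∈ S
    · exact ⟨⟨none, hvS⟩⟩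
    · obtain ⟨a, ha⟩ := hmem v hvS
      exact ⟨⟨a, ha⟩⟩
  · rintro (_ | ⟨L, i⟩)
    exacts [hSfin, ((hdec L).bag_finite i).image _]
  · rintro (_ | ⟨L, i⟩)
    · exact hSk
    · exact (Set.ncard_image_of_injective _ Subtype.val_injective).trans_le
        ((hdec L).ncard_bag_le i)

end TreeDecomposition

namespace IsWedge

variable {V : Type u} {G : SimpleGraph V} {L M : Set V} {x y : V}

lemma mem_of_adj (hL : IsWedge G L x y) {u v : V} (hu : u ∈ L \ {x, y}) (huv : G.Adj u v) :
    v ∈ L := by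
  by_cases hv : v ∈ L \ {x, y}
  · exact hv.1
  · have hv' : v ∈ ({x, y} : Set V) := hL.2.2.2.2.1 ▸ ⟨hv, u, hu, huv⟩
    rcases hv' with rfl | rfl
    exacts [hL.2.1, hL.2.2.1]

lemma sdiff_subset_of_mem (hL : IsWedge G L x y) (hM : IsWedge G M x y) {v : V}
    (hvL : v ∈ L \ {x, y}) (hvM : v ∈ M) : L \ {x, y} ⊆ M \ {x, y} := by
  intro u hu
  refine ⟨?_, hu.2⟩
  by_contra huM
  obtain ⟨p⟩ := hL.2.2.2.2.2.preconnected ⟨v, hvL⟩ ⟨u, hu⟩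
  obtain ⟨d, -, hd₁, hd₂⟩ := p.exists_boundary_dart {a | (a : V) ∈ M} hvM huM
  exact hd₂ (hM.mem_of_adj ⟨hd₁, d.fst.2.2⟩ d.adj)

lemma eq_of_mem (hL : IsWedge G L x y) (hM : IsWedge G M x y) {v : V} (hv : v ∉ ({x, y} : Set V))
    (hvL : v ∈ L) (hvM : v ∈ M) : L = M := by
  have hxy : ∀ {N}, IsWedge G N x y → ({x, y} : Set V) ⊆ N := fun hN =>
    Set.insert_subset hN.2.1 (Set.singleton_subset_iff.mpr hN.2.2.1)
  rw [← Set.sdiff_union_of_subset (hxy hL), ← Set.sdiff_union_of_subset (hxy hM),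
    (hL.sdiff_subset_of_mem hM ⟨hvL, hv⟩ hvM).antisymm (hM.sdiff_subset_of_mem hL ⟨hvM, hv⟩ hvL)]

end IsWedge

theorem stmt9_general {V : Type u} (G : SimpleGraph V) (x y : V) (𝓛 : Set (Set V))
    (hwedge : ∀ L ∈ 𝓛, IsWedge G L x y)
    (hjuicy : ∀ L ∈ 𝓛, HasTreewidthLE (wedgePlus G L x y) 2)
    (hcover : ({x, y} : Set V) ∪ ⋃₀ 𝓛 = Set.univ) :
    HasTreewidthLE G 2 := by
  choose ι t bag hdec using fun L : 𝓛 => hasTreewidthLE_iff.mp (hjuicy L L.2)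
  have hends : ∀ L : 𝓛, ∃ i, ({x, y} : Set V) ⊆ Subtype.val '' bag L i := fun L => by
    have hL := hwedge L L.2
    obtain ⟨i, hx, hy⟩ := (hdec L).exists_adj_mem_bag ⟨x, hL.2.1⟩ ⟨y, hL.2.2.1⟩
      ⟨hL.2.2.2.1, Or.inr (Or.inl ⟨rfl, rfl⟩)⟩
    exact ⟨i, Set.insert_subset ⟨_, hx, rfl⟩ (Set.singleton_subset_iff.mpr ⟨_, hy, rfl⟩)⟩
  choose root hroot using hends
  have hpiece : ∀ v, v ∉ ({x, y} : Set V) → ∃ L : 𝓛, v ∈ (L : Set V) := fun v hv => by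
    have hv' : v ∈ ({x, y} : Set V) ∪ ⋃₀ 𝓛 := hcover ▸ Set.mem_univ v
    obtain ⟨L, hL, hvL⟩ := hv'.resolve_left hv
    exact ⟨⟨L, hL⟩, hvL⟩
  refine hasTreewidthLE_iff.mpr ⟨_, _, _, isTreeDecomposition_starGlue hdec hroot
    (Set.toFinite _) ((Set.ncard_insert_le x {y}).trans (by simp)) hpiece ?_ ?_⟩
  · exact fun L M v hv hvL hvM => Subtype.ext ((hwedge L L.2).eq_of_mem (hwedge M M.2) hv hvL hvM)
  · intro u v huv hu
    obtain ⟨L, huL⟩ := hpiece u hu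
    exact ⟨L, huL, (hwedge L L.2).mem_of_adj ⟨huL, hu⟩ huv, huv.ne, Or.inl huv⟩

/-- If `G` contains a juicy citrus with ends `x, y` and wedge set `𝓛` whose vesicle
set `{x,y} ∪ ⋃ 𝓛` is all of `V(G)`, then `G` has treewidth at most 2.
(A citrus is a set of wedges all with ends `x, y`, such that the wedge set is nonempty
or `xy ∈ E(G)`; it is juicy if each wedge `L` is juicy, i.e. `G_L ∪ {xy}` has
treewidth at most 2.) -/
theorem stmt9 {V : Type u} (G : SimpleGraph V) (x y : V) (𝓛 : Set (Set V))
    (hwedge : ∀ L ∈ 𝓛, IsWedge G L x y)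
    (hjuicy : ∀ L ∈ 𝓛, HasTreewidthLE (wedgePlus G L x y) 2)
    (hcitrus : 𝓛.Nonempty ∨ G.Adj x y)
    (hcover : ({x, y} : Set V) ∪ ⋃₀ 𝓛 = Set.univ) :
    HasTreewidthLE G 2 :=
  stmt9_general G x y 𝓛 hwedge hjuicy hcover
end

section
/- Let G be a 2-connected graph that contains no subgraph isomorphic to P_10 (the path on 10 vertices), let P = (v_1,...,v_9) be a longest path in G, and let D be a connected component of G − V(P) with at least 2 vertices. Then G[D] is a star: there is a vertex x in D adjacent to all other vertices of D, and D has no other edges. -/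
/-- `G` is 2-connected: at least 3 vertices, connected, and no cut vertex. -/
def TwoConnected {V : Type*} (G : SimpleGraph V) : Prop :=
  3 ≤ Nat.card V ∧ G.Connected ∧ ∀ v : V, (G.induce {u : V | u ≠ v}).Connected

/-- `G` contains the subdivided claw `S_{a,b,c}` (three paths of edge-lengths
`a`, `b`, `c` sharing one common endpoint, otherwise disjoint) as a subgraph. -/
def ContainsSubdividedClaw {V : Type*} (G : SimpleGraph V) (a b c : ℕ) : Prop :=
  ∃ (f : Fin (a + 1) → V) (g : Fin (b + 1) → V) (h : Fin (c + 1) → V),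
    f 0 = g 0 ∧ g 0 = h 0 ∧
    IsPathEmb G (a + 1) f ∧ IsPathEmb G (b + 1) g ∧ IsPathEmb G (c + 1) h ∧
    (∀ i j, f i = g j → i = 0 ∧ j = 0) ∧
    (∀ i j, f i = h j → i = 0 ∧ j = 0) ∧
    (∀ i j, g i = h j → i = 0 ∧ j = 0)

/-!
Write `P = v₀ ⋯ v₈` and say that a vertex outside `P` is attached at `i` if it is adjacent to
`vᵢ`. Gluing a path `Q` of `G - V(P)` to segments of `P` gives a path of `G`, so of at most 9
vertices: if `Q` ends at a vertex attached at `u`, then `|Q| ≤ u` and `|Q| ≤ 8 - u`; if its ends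
are attached at `i < j`, then also `|Q| < j - i`. Together, `|Q| ≤ 2` when the ends of `Q` are
attached at distinct indices.

A vertex `x` at which no path on three vertices of `G - V(P)` ends is the centre of a star
containing its whole component. By 2-connectivity, from every vertex outside `P` one can reach
`P` while avoiding any other given vertex; this yields vertices `w₁, w₂` of the component
attached at indices `i < j`. If `w₁ ≠ w₂`, the path between them forces `i < 3` or `5 < j`, and
a vertex attached at such an index is a star centre by the first bound. If `w₁ = w₂ =: z`, then
`z` has two indices to choose from, so no path of `G - V(P)` on three vertices joins `z` to an
attached vertex. For a path `d c z`, escaping from `c` while avoiding `z` therefore shows that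
`c` is attached, and escaping from `d` while avoiding `c` yields such a path, from `z` or to `z`.
-/

namespace SimpleGraph

variable {W : Type*} {H : SimpleGraph W} {x c d : W}

def IsStarCenter (H : SimpleGraph W) (x : W) : Prop :=
  ∀ ⦃c d : W⦄, H.Adj x c → H.Adj c d → d = x

lemma IsStarCenter.eq_or_adj_of_reachable (hx : H.IsStarCenter x) (hc : H.Reachable c x) :
    c = x ∨ H.Adj x c := by
  obtain ⟨p⟩ := hc
  induction p with
  | nil => exact .inl rfl
  | cons hcd _ ih =>
    rcases ih hx with rfl | hxd
    · exact .inr hcd.symm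
    · exact .inl (hx hxd hcd.symm)

lemma IsStarCenter.adj_of_reachable (hx : H.IsStarCenter x) (hc : H.Reachable x c)
    (hcx : c ≠ x) : H.Adj x c :=
  (hx.eq_or_adj_of_reachable hc.symm).resolve_left hcx

lemma IsStarCenter.eq_or_eq_of_adj (hx : H.IsStarCenter x) (hc : H.Reachable x c)
    (hcd : H.Adj c d) : c = x ∨ d = x :=
  (hx.eq_or_adj_of_reachable hc.symm).imp_right fun hxc => hx hxc hcd

end SimpleGraph

section

open SimpleGraph

variable {V : Type*} {G : SimpleGraph V}

def IsListPath (G : SimpleGraph V) (l : List V) : Prop :=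
  l.IsChain G.Adj ∧ l.Nodup

lemma IsListPath.append {l₁ l₂ : List V} (h₁ : IsListPath G l₁) (h₂ : IsListPath G l₂)
    (hdisj : l₁.Disjoint l₂) (hadj : ∀ x ∈ l₁.getLast?, ∀ y ∈ l₂.head?, G.Adj x y) :
    IsListPath G (l₁ ++ l₂) :=
  ⟨List.isChain_append.2 ⟨h₁.1, h₂.1, hadj⟩,
    List.nodup_append.2 ⟨h₁.2, h₂.2, fun _ ha _ hb hab => hdisj ha (hab ▸ hb)⟩⟩

lemma IsListPath.infix {l₁ l₂ : List V} (h : IsListPath G l₂) (h₁₂ : l₁ <:+: l₂) :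
    IsListPath G l₁ :=
  ⟨h.1.infix h₁₂, h.2.sublist h₁₂.sublist⟩

lemma IsListPath.length_le {n : ℕ} (hfree : ¬ ContainsPathOn G (n + 1)) {l : List V}
    (hl : IsListPath G l) : l.length ≤ n := by
  by_contra! hlong
  have hpre : IsListPath G (l.take (n + 1)) := hl.infix (l.take_prefix _).isInfix
  have hlen : (l.take (n + 1)).length = n + 1 := by simp; omega
  exact hfree ⟨(l.take (n + 1)).get ∘ Fin.cast hlen.symm,
    (List.nodup_iff_injective_get.1 hpre.2).comp (Fin.cast_injective _),
    fun i hi => List.isChain_iff_getElem.1 hpre.1 i (by omega)⟩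

lemma IsPathEmb.isListPath_ofFn {n : ℕ} {f : Fin n → V} (hP : IsPathEmb G n f) :
    IsListPath G (List.ofFn f) :=
  ⟨List.isChain_ofFn.2 hP.2, List.nodup_ofFn.2 hP.1⟩

lemma SimpleGraph.Walk.IsPath.isListPath_support {x y : V} {p : G.Walk x y} (hp : p.IsPath) :
    IsListPath G p.support :=
  ⟨p.isChain_adj_support, hp.support_nodup⟩

@[simp]
lemma SimpleGraph.Walk.head?_support {x y : V} (p : G.Walk x y) : p.support.head? = some x := by
  cases p <;> rfl

@[simp]
lemma SimpleGraph.Walk.getLast?_support {x y : V} (p : G.Walk x y) :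
    p.support.getLast? = some y := by
  rw [List.getLast?_eq_some_getLast p.support_ne_nil, Walk.getLast_support]

section LongestPath

variable {n : ℕ} {f : Fin n → V} {x y : V} {p : G.Walk x y}

lemma IsPathEmb.comp_rev (hP : IsPathEmb G n f) : IsPathEmb G n (f ∘ Fin.rev) := by
  refine ⟨hP.1.comp Fin.rev_injective, fun i hi => ?_⟩
  convert (hP.2 (n - 2 - i) (by omega)).symm using 2 <;>
    exact congrArg f (Fin.ext (by simp only [Fin.val_rev]; omega))

lemma isListPath_support_append_drop (hP : IsPathEmb G n f) (hp : p.IsPath)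
    (hpf : ∀ v ∈ p.support, v ∉ Set.range f) {u : Fin n} (hy : G.Adj y (f u)) :
    IsListPath G (p.support ++ (List.ofFn f).drop u) := by
  refine hp.isListPath_support.append
    (hP.isListPath_ofFn.infix (List.drop_suffix _ _).isInfix) ?_ ?_
  · intro v hv hv'
    exact hpf v hv ((List.mem_ofFn' f v).1 (List.mem_of_mem_drop hv'))
  · simpa using hy

lemma length_lt_of_adj_end (hP : IsPathEmb G n f) (hfree : ¬ ContainsPathOn G (n + 1))
    (hp : p.IsPath) (hpf : ∀ v ∈ p.support, v ∉ Set.range f) {u : Fin n}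
    (hy : G.Adj y (f u)) : p.length < u := by
  have := (isListPath_support_append_drop hP hp hpf hy).length_le hfree
  simp only [List.length_append, Walk.length_support, List.length_drop, List.length_ofFn] at this
  omega

lemma length_lt_rev_of_adj_end (hP : IsPathEmb G n f) (hfree : ¬ ContainsPathOn G (n + 1))
    (hp : p.IsPath) (hpf : ∀ v ∈ p.support, v ∉ Set.range f) {u : Fin n}
    (hy : G.Adj y (f u)) : p.length < u.rev :=
  length_lt_of_adj_end hP.comp_rev hfree hp
    (by rwa [Fin.rev_surjective.range_comp]) (by simpa using hy)

lemma length_add_lt_of_adj_of_adj (hP : IsPathEmb G n f) (hfree : ¬ ContainsPathOn G (n + 1))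
    (hp : p.IsPath) (hpf : ∀ v ∈ p.support, v ∉ Set.range f) {i j : Fin n}
    (hx : G.Adj x (f i)) (hy : G.Adj y (f j)) (hij : i < j) : p.length + i + 1 < j := by
  have hpath := (hP.isListPath_ofFn.infix
    (List.take_prefix (i + 1) _).isInfix).append (isListPath_support_append_drop hP hp hpf hy)
    ?_ ?_
  · have := hpath.length_le hfree
    simp only [List.length_append, List.length_take, Walk.length_support, List.length_drop,
      List.length_ofFn] at this
    omega
  · intro v hv hv'
    rcases List.mem_append.1 hv' with hv' | hv'
    · exact hpf v hv' ((List.mem_ofFn' f v).1 (List.mem_of_mem_take hv))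
    · exact List.disjoint_take_drop hP.isListPath_ofFn.2 (by omega : (i : ℕ) + 1 ≤ j) hv hv'
  · simpa [List.getLast?_take] using hx.symm

lemma three_mul_length_add_five_le (hP : IsPathEmb G n f) (hfree : ¬ ContainsPathOn G (n + 1))
    (hp : p.IsPath) (hpf : ∀ v ∈ p.support, v ∉ Set.range f) {i j : Fin n}
    (hx : G.Adj x (f i)) (hy : G.Adj y (f j)) (hij : i ≠ j) : 3 * p.length + 5 ≤ n := by
  wlog hlt : i < j generalizing x y i j
  · simpa using this (p := p.reverse) hp.reverse (by simpa using hpf) hy hx hij.symm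
      (lt_of_le_of_ne (not_lt.1 hlt) hij.symm)
  have h₁ := length_lt_of_adj_end hP hfree hp.reverse (by simpa using hpf) hx
  have h₂ := length_lt_rev_of_adj_end hP hfree hp hpf hy
  have h₃ := length_add_lt_of_adj_of_adj hP hfree hp hpf hx hy hlt
  simp only [Walk.length_reverse, Fin.val_rev] at h₁ h₂
  omega

end LongestPath

lemma SimpleGraph.Walk.exists_walk_adj_mem_of_notMem_of_mem {T : Set V} {c t : V}
    (q : G.Walk c t) (hc : c ∉ T) (ht : t ∈ T) :
    ∃ w m, ∃ p : G.Walk c w, p.support ⊆ q.support ∧ (∀ v ∈ p.support, v ∉ T) ∧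
      m ∈ q.support ∧ m ∈ T ∧ G.Adj w m := by
  induction q with
  | nil => exact absurd ht hc
  | @cons c c' t h q ih =>
    by_cases hc' : c' ∈ T
    · exact ⟨c, c', .nil, by simp, by simpa using hc, by simp, hc', h⟩
    · obtain ⟨w, m, p, hsub, hoff, hmq, hmT, hwm⟩ := ih hc' ht
      refine ⟨w, m, .cons h p, ?_, ?_, by simp [hmq], hmT, hwm⟩
      · simpa using List.subset_cons_of_subset _ hsub
      · simpa [hc] using hoff

lemma SimpleGraph.Reachable.exists_isPath_support_subset {T : Set V} {x y : T}
    (h : (G.induce T).Reachable x y) :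
    ∃ p : G.Walk x y, p.IsPath ∧ ∀ v ∈ p.support, v ∈ T := by
  obtain ⟨p, hp⟩ := h.exists_isPath
  refine ⟨p.map (Embedding.induce T).toHom, hp.map Subtype.val_injective, fun v hv => ?_⟩
  obtain ⟨v, -, rfl⟩ := List.mem_map.1 (Walk.support_map _ p ▸ hv)
  exact v.2

lemma exists_isPath_adj_mem_of_connected_induce_ne {T : Set V} (hT : T.Nontrivial) {z c : V}
    (hconn : (G.induce {u | u ≠ z}).Connected) (hc : c ∉ T) (hcz : c ≠ z) :
    ∃ w m, ∃ p : G.Walk c w, p.IsPath ∧ (∀ v ∈ p.support, v ∉ T) ∧ z ∉ p.support ∧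
      m ∈ T ∧ m ≠ z ∧ G.Adj w m := by
  classical
  obtain ⟨t, ht, htz⟩ := hT.exists_ne z
  obtain ⟨q, -, hqz⟩ := (hconn.preconnected ⟨c, hcz⟩ ⟨t, htz⟩).exists_isPath_support_subset
  obtain ⟨w, m, p, hsub, hoff, hmq, hmT, hwm⟩ := q.exists_walk_adj_mem_of_notMem_of_mem hc ht
  have hbypass := p.support_bypass_subset_support
  exact ⟨w, m, p.bypass, p.bypass_isPath, fun v hv => hoff v (hbypass hv),
    fun hz => hqz z (hsub (hbypass hz)) rfl, hmT, hqz m hmq, hwm⟩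

lemma IsPathEmb.nontrivial_range {n : ℕ} {f : Fin (n + 2) → V} (hP : IsPathEmb G (n + 2) f) :
    (Set.range f).Nontrivial :=
  ⟨f 0, ⟨0, rfl⟩, f 1, ⟨1, rfl⟩, hP.1.ne (by simp)⟩

section NineVertexPath

variable {f : Fin 9 → V}

lemma isStarCenter_of_adj_of_lt_three_or_five_lt (hP : IsPathEmb G 9 f)
    (hfree : ¬ ContainsPathOn G 10) {x : ↥(Set.range f)ᶜ} {u : Fin 9} (hx : G.Adj x (f u))
    (hu : (u : ℕ) < 3 ∨ 5 < u) : (G.induce (Set.range f)ᶜ).IsStarCenter x := by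
  intro c d hxc hcd
  rw [induce_adj] at hxc hcd
  by_contra hdx
  let p : G.Walk d x := .cons hcd.symm (.cons hxc.symm .nil)
  have hp : p.IsPath := by
    simp [p, Walk.cons_isPath_iff, hxc.ne.symm, hcd.ne.symm, Subtype.coe_ne_coe.2 hdx]
  have hpf : ∀ v ∈ p.support, v ∉ Set.range f :=
    List.forall_mem_cons.2 ⟨d.2, List.forall_mem_cons.2 ⟨c.2, List.forall_mem_singleton.2 x.2⟩⟩
  have h₁ := length_lt_of_adj_end hP hfree hp hpf hx
  have h₂ := length_lt_rev_of_adj_end hP hfree hp hpf hx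
  simp only [p, Walk.length_cons, Walk.length_nil, Fin.val_rev] at h₁ h₂
  omega

lemma isStarCenter_of_adj_of_adj (hP : IsPathEmb G 9 f) (hfree : ¬ ContainsPathOn G 10)
    (hcut : ∀ v, (G.induce {u | u ≠ v}).Connected) {z : ↥(Set.range f)ᶜ} {i j : Fin 9}
    (hzi : G.Adj z (f i)) (hzj : G.Adj z (f j)) (hij : i ≠ j) :
    (G.induce (Set.range f)ᶜ).IsStarCenter z := by
  classical
  have hrange := hP.nontrivial_range
  have hshort : ∀ {w : V} (p : G.Walk z w) {u : Fin 9}, p.IsPath →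
      (∀ v ∈ p.support, v ∉ Set.range f) → G.Adj w (f u) → p.length ≤ 1 := by
    intro w p u hp hpf hw
    obtain ⟨r, hru, hzr⟩ : ∃ r, r ≠ u ∧ G.Adj z (f r) := by
      by_cases hiu : i = u
      · exact ⟨j, hiu ▸ hij.symm, hzj⟩
      · exact ⟨i, hiu, hzi⟩
    have := three_mul_length_add_five_le hP hfree hp hpf hzr hw hru
    omega
  intro c d hzc hcd
  rw [induce_adj] at hzc hcd
  by_contra hdz
  obtain ⟨w, -, R, hR, hRf, hzR, ⟨u, rfl⟩, -, hwu⟩ :=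
    exists_isPath_adj_mem_of_connected_induce_ne hrange (hcut z) c.2 hzc.ne.symm
  have hcw : (c : V) = w := by
    have := hshort (.cons hzc R) (hR.cons hzR) (List.forall_mem_cons.2 ⟨z.2, hRf⟩) hwu
    rw [Walk.length_cons] at this
    exact Walk.eq_of_length_eq_zero (p := R) (by omega)
  subst hcw
  obtain ⟨w', -, R', hR', hR'f, hcR', ⟨u', rfl⟩, -, hw'u'⟩ :=
    exists_isPath_adj_mem_of_connected_induce_ne hrange (hcut c) d.2 hcd.ne.symm
  by_cases hzR' : (z : V) ∈ R'.support
  · have hsub := R'.support_takeUntil_subset_support hzR'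
    let Q : G.Walk c z := .cons hcd (R'.takeUntil z hzR')
    have hQ : Q.IsPath := (hR'.takeUntil hzR').cons fun h => hcR' (hsub h)
    have hQf : ∀ v ∈ Q.support, v ∉ Set.range f :=
      List.forall_mem_cons.2 ⟨c.2, fun v hv => hR'f v (hsub hv)⟩
    have := hshort Q.reverse hQ.reverse (by simpa using hQf) hwu
    rw [Walk.length_reverse, Walk.length_cons] at this
    exact hdz (Subtype.ext (Walk.eq_of_length_eq_zero (p := R'.takeUntil z hzR') (by omega)))
  · have := hshort (.cons hzc (.cons hcd R')) ((hR'.cons hcR').cons (by simp [hzR', hzc.ne]))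
      (List.forall_mem_cons.2 ⟨z.2, List.forall_mem_cons.2 ⟨c.2, hR'f⟩⟩) hw'u'
    simp only [Walk.length_cons] at this
    omega

lemma isStarCenter_or_isStarCenter_of_reachable (hP : IsPathEmb G 9 f)
    (hfree : ¬ ContainsPathOn G 10) {x y : ↥(Set.range f)ᶜ}
    (hxy : (G.induce (Set.range f)ᶜ).Reachable x y) (hne : x ≠ y) {i j : Fin 9}
    (hxi : G.Adj x (f i)) (hyj : G.Adj y (f j)) (hij : i < j) :
    (G.induce (Set.range f)ᶜ).IsStarCenter x ∨ (G.induce (Set.range f)ᶜ).IsStarCenter y := by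
  obtain ⟨p, hp, hpf⟩ := hxy.exists_isPath_support_subset
  have hlen : p.length ≠ 0 := fun h => hne (Subtype.ext (Walk.eq_of_length_eq_zero h))
  have := length_add_lt_of_adj_of_adj hP hfree hp hpf hxi hyj hij
  by_cases hi : (i : ℕ) < 3
  · exact .inl (isStarCenter_of_adj_of_lt_three_or_five_lt hP hfree hxi (.inl hi))
  · exact .inr (isStarCenter_of_adj_of_lt_three_or_five_lt hP hfree hyj (.inr (by omega)))

lemma exists_reachable_isStarCenter (hP : IsPathEmb G 9 f) (hfree : ¬ ContainsPathOn G 10)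
    (hcut : ∀ v, (G.induce {u | u ≠ v}).Connected) (a : ↥(Set.range f)ᶜ) :
    ∃ x, (G.induce (Set.range f)ᶜ).Reachable a x ∧ (G.induce (Set.range f)ᶜ).IsStarCenter x := by
  have hrange := hP.nontrivial_range
  obtain ⟨w₁, -, R₁, -, hR₁f, -, ⟨i, rfl⟩, -, hw₁⟩ :=
    exists_isPath_adj_mem_of_connected_induce_ne hrange (hcut (f 0)) a.2 fun h => a.2 ⟨0, h.symm⟩
  obtain ⟨w₂, -, R₂, -, hR₂f, -, ⟨j, rfl⟩, hji, hw₂⟩ :=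
    exists_isPath_adj_mem_of_connected_induce_ne hrange (hcut (f i)) a.2 fun h => a.2 ⟨i, h.symm⟩
  have hij : i ≠ j := fun h => hji (h ▸ rfl)
  let x₁ : ↥(Set.range f)ᶜ := ⟨w₁, hR₁f _ R₁.end_mem_support⟩
  let x₂ : ↥(Set.range f)ᶜ := ⟨w₂, hR₂f _ R₂.end_mem_support⟩
  have hr₁ : (G.induce (Set.range f)ᶜ).Reachable a x₁ := ⟨R₁.induce _ hR₁f⟩
  have hr₂ : (G.induce (Set.range f)ᶜ).Reachable a x₂ := ⟨R₂.induce _ hR₂f⟩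
  have hcenter : (G.induce (Set.range f)ᶜ).IsStarCenter x₁ ∨
      (G.induce (Set.range f)ᶜ).IsStarCenter x₂ := by
    by_cases hx : x₁ = x₂
    · exact .inl (isStarCenter_of_adj_of_adj hP hfree hcut hw₁ (congrArg Subtype.val hx ▸ hw₂) hij)
    rcases hij.lt_or_gt with hlt | hlt
    · exact isStarCenter_or_isStarCenter_of_reachable hP hfree (hr₁.symm.trans hr₂) hx hw₁ hw₂ hlt
    · exact (isStarCenter_or_isStarCenter_of_reachable hP hfree (hr₂.symm.trans hr₁)
        (Ne.symm hx) hw₂ hw₁ hlt).symm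
  rcases hcenter with h | h
  exacts [⟨x₁, hr₁, h⟩, ⟨x₂, hr₂, h⟩]

end NineVertexPath

end

theorem stmt12_general {V : Type*} (G : SimpleGraph V) (h2c : TwoConnected G)
    (hfree : ¬ ContainsPathOn G 10) (f : Fin 9 → V) (hP : IsPathEmb G 9 f)
    (S : Set V) (hS : S = (Set.range f)ᶜ)
    (a : S) :
    ∃ x : S, (G.induce S).Reachable a x ∧
      (∀ c : S, (G.induce S).Reachable a c → c ≠ x → (G.induce S).Adj x c) ∧
      (∀ c d : S, (G.induce S).Reachable a c → (G.induce S).Adj c d →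
        c = x ∨ d = x) := by
  subst hS
  obtain ⟨x, hax, hx⟩ := exists_reachable_isStarCenter hP hfree h2c.2.2 a
  exact ⟨x, hax, fun c hac => hx.adj_of_reachable (hax.symm.trans hac),
    fun c d hac => hx.eq_or_eq_of_adj (hax.symm.trans hac)⟩

/-- In a 2-connected `P₁₀`-subgraph-free graph with a longest path
`P = (v_1, …, v_9)`, every component `D` of `G − V(P)` with at least 2 vertices induces
a star: some vertex `x` of `D` is adjacent to all other vertices of `D`, and every edge
inside `D` is incident to `x`. -/
theorem stmt12 {V : Type*} (G : SimpleGraph V) (h2c : TwoConnected G)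
    (hfree : ¬ ContainsPathOn G 10) (f : Fin 9 → V) (hP : IsPathEmb G 9 f)
    (S : Set V) (hS : S = (Set.range f)ᶜ)
    (a b : S) (hab : (G.induce S).Reachable a b) (hne : a ≠ b) :
    ∃ x : S, (G.induce S).Reachable a x ∧
      (∀ c : S, (G.induce S).Reachable a c → c ≠ x → (G.induce S).Adj x c) ∧
      (∀ c d : S, (G.induce S).Reachable a c → (G.induce S).Adj c d →
        c = x ∨ d = x) :=
  stmt12_general G h2c hfree f hP S hS a
end

section
/- Let G be a 2-connected graph that contains no subgraph isomorphic to the subdivided claw S_{1,3,6}, and suppose the longest path of G has exactly r ≥ 12 vertices. Then V(G) = V(P) for any longest path P of G, i.e., G has exactly r vertices. -/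
/-!
Let `P` be a longest path and `w ∉ P` a neighbour of a vertex `c` of `P`. Then `c` is not an end
of `P`, and if `c` had at least three vertices of `P` on one side and six on the other, then `c`,
`w` and these two segments would form an `S_{1,3,6}`. As `|P| ≥ 12`, `c` is the second or third
vertex from one end, say from the start. By 2-connectivity there is a path `Q` from `w` back to
`P` avoiding `c`; let `d` be its first vertex on `P`, so the same applies to `d`. If `d` is also
among the first three vertices, then `c` and `d` are consecutive on `P` and `Q` reroutes `P` into a
longer path. Otherwise `d` is among the last three, and the predecessor of `c`, the path `Q`
continued along `P` towards its end, and the six vertices after `c` form an `S_{1,3,6}` at `c`.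
-/

open List

namespace SimpleGraph

variable {V : Type*} {G : SimpleGraph V}

theorem isPathEmb_iff_ofFn {n : ℕ} {f : Fin n → V} :
    IsPathEmb G n f ↔ (ofFn f).Nodup ∧ (ofFn f).IsChain G.Adj := by
  simp [IsPathEmb, nodup_ofFn, isChain_iff_getElem]

theorem isPathEmb_getElem {l : List V} (hn : l.Nodup) (hc : l.IsChain G.Adj) :
    IsPathEmb G l.length (fun i => l[(i : ℕ)]) := by
  rw [isPathEmb_iff_ofFn, ofFn_getElem]
  exact ⟨hn, hc⟩

theorem containsPathOn_of_le_length {l : List V} (hn : l.Nodup) (hc : l.IsChain G.Adj) {n : ℕ}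
    (h : n ≤ l.length) : ContainsPathOn G n := by
  have h' : ContainsPathOn G (l.take n).length :=
    ⟨_, isPathEmb_getElem (hn.sublist (take_sublist n l)) (hc.take n)⟩
  rwa [length_take, min_eq_left h] at h'

theorem eq_zero_of_getElem_cons_eq {c : V} {X Y : List V} (hX : c ∉ X) (hY : c ∉ Y)
    (hXY : ∀ x ∈ X, ∀ y ∈ Y, x ≠ y) {i : Fin (X.length + 1)} {j : Fin (Y.length + 1)}
    (h : (c :: X)[(i : ℕ)] = (c :: Y)[(j : ℕ)]) : i = 0 ∧ j = 0 := by
  induction i using Fin.cases <;> induction j using Fin.cases <;>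
    simp only [Fin.coe_ofNat_eq_mod, Nat.zero_mod, Fin.val_succ, getElem_cons_zero,
      getElem_cons_succ, Fin.succ_ne_zero, and_self, and_false, and_true] at h ⊢
  · exact hY (h ▸ getElem_mem _)
  · exact hX (h ▸ getElem_mem _)
  · exact hXY _ (getElem_mem _) _ (getElem_mem _) h

theorem containsSubdividedClaw_of_lists {c : V} {X Y Z : List V}
    (hX : (c :: X).IsChain G.Adj) (hY : (c :: Y).IsChain G.Adj) (hZ : (c :: Z).IsChain G.Adj)
    (hn : (c :: (X ++ Y ++ Z)).Nodup) : ContainsSubdividedClaw G X.length Y.length Z.length := by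
  simp only [nodup_cons, nodup_append, mem_append, not_or] at hn
  obtain ⟨⟨⟨hcX, hcY⟩, hcZ⟩, ⟨hXn, hYn, hXY⟩, hZn, hXYZ⟩ := hn
  refine ⟨fun i => (c :: X)[(i : ℕ)], fun i => (c :: Y)[(i : ℕ)], fun i => (c :: Z)[(i : ℕ)],
    rfl, rfl, isPathEmb_getElem (nodup_cons.2 ⟨hcX, hXn⟩) hX,
    isPathEmb_getElem (nodup_cons.2 ⟨hcY, hYn⟩) hY, isPathEmb_getElem (nodup_cons.2 ⟨hcZ, hZn⟩) hZ,
    fun _ _ h => eq_zero_of_getElem_cons_eq hcX hcY hXY h,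
    fun _ _ h => eq_zero_of_getElem_cons_eq hcX hcZ (fun x hx => hXYZ x (.inl hx)) h,
    fun _ _ h => eq_zero_of_getElem_cons_eq hcY hcZ (fun y hy => hXYZ y (.inr hy)) h⟩

theorem isChain_adj_reverse {l : List V} : l.reverse.IsChain G.Adj ↔ l.IsChain G.Adj := by
  simp_rw [isChain_reverse, G.adj_comm]

structure IsLongestPath (G : SimpleGraph V) (P : List V) : Prop where
  nodup : P.Nodup
  isChain : P.IsChain G.Adj
  length_le : ∀ l : List V, l.Nodup → l.IsChain G.Adj → l.length ≤ P.length

theorem isLongestPath_ofFn {r : ℕ} {f : Fin r → V} (hf : IsPathEmb G r f)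
    (hlong : ¬ ContainsPathOn G (r + 1)) : G.IsLongestPath (ofFn f) := by
  obtain ⟨hn, hc⟩ := isPathEmb_iff_ofFn.1 hf
  refine ⟨hn, hc, fun l hln hlc => ?_⟩
  rw [length_ofFn]
  by_contra h
  exact hlong (containsPathOn_of_le_length hln hlc (by omega))

variable {P A B Q : List V} {c w : V}

theorem IsLongestPath.reverse (hP : G.IsLongestPath P) : G.IsLongestPath P.reverse :=
  ⟨nodup_reverse.2 hP.nodup, isChain_adj_reverse.2 hP.isChain, by simpa using hP.length_le⟩

theorem IsLongestPath.not_adj_head (hP : G.IsLongestPath (c :: B)) (hw : w ∉ c :: B) :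
    ¬ G.Adj w c := fun h => by
  simpa using hP.length_le _ (nodup_cons.2 ⟨hw, hP.nodup⟩) (hP.isChain.cons_cons h)

theorem containsSubdividedClaw_of_adj (hn : (A ++ c :: B).Nodup)
    (hc : (A ++ c :: B).IsChain G.Adj) (hw : w ∉ A ++ c :: B) (hwc : G.Adj c w)
    (hA : 3 ≤ A.length) (hB : 6 ≤ B.length) : ContainsSubdividedClaw G 1 3 6 := by
  have hcA : (c :: A.reverse).IsChain G.Adj := by
    rw [append_cons] at hc
    simpa using isChain_adj_reverse.2 hc.left_of_append
  have hnw : (c :: ([w] ++ A.reverse ++ B)).Nodup := by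
    have := nodup_cons.2 ⟨hw, hn⟩
    simp only [nodup_cons, nodup_append, mem_append, mem_cons, mem_reverse, nodup_reverse]
      at this ⊢
    grind
  have := containsSubdividedClaw_of_lists (isChain_pair.2 hwc) (by simpa using hcA.take 4)
    (by simpa using hc.right_of_append.take 7)
    (hnw.sublist (((Sublist.refl _).append (take_sublist 3 _)).append (take_sublist 6 _)
      |>.cons_cons c))
  simpa [hA, hB] using this

theorem IsLongestPath.length_le_two_of_adj (hP : G.IsLongestPath (A ++ c :: B))
    (hfree : ¬ ContainsSubdividedClaw G 1 3 6) (hw : w ∉ A ++ c :: B) (hwc : G.Adj c w)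
    (hB : 6 ≤ B.length) : 1 ≤ A.length ∧ A.length ≤ 2 := by
  refine ⟨length_pos_iff.2 ?_, ?_⟩
  · rintro rfl
    exact hP.not_adj_head hw hwc.symm
  · by_contra h
    exact hfree (containsSubdividedClaw_of_adj hP.nodup hP.isChain hw hwc (by omega) hB)

theorem IsLongestPath.near_end_of_adj (hP : G.IsLongestPath (A ++ c :: B))
    (hfree : ¬ ContainsSubdividedClaw G 1 3 6) (hlen : 11 ≤ A.length + B.length)
    (hw : w ∉ A ++ c :: B) (hwc : G.Adj c w) :
    (1 ≤ A.length ∧ A.length ≤ 2) ∨ (1 ≤ B.length ∧ B.length ≤ 2) := by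
  by_cases hB : 6 ≤ B.length
  · exact .inl (hP.length_le_two_of_adj hfree hw hwc hB)
  · have hrev : G.IsLongestPath (B.reverse ++ c :: A.reverse) := by simpa using hP.reverse
    have := hrev.length_le_two_of_adj hfree (by simp at hw ⊢; tauto) hwc (by simp; omega)
    exact .inr (by simpa using this)

theorem IsLongestPath.eq_nil_of_detour {x y : V} {R : List V}
    (hP : G.IsLongestPath (A ++ x :: y :: R)) (hQP : ∀ q ∈ Q, q ∉ A ++ x :: y :: R)
    (hQ : Q.Nodup) (hch : (x :: (Q ++ [y])).IsChain G.Adj) : Q = [] := by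
  have hn : (A ++ x :: (Q ++ y :: R)).Nodup := by
    have := hP.nodup
    simp only [nodup_cons, nodup_append, mem_append, mem_cons] at this hQP ⊢
    grind
  have hc : (A ++ x :: (Q ++ y :: R)).IsChain G.Adj := by
    have hAx : (A ++ [x]).IsChain G.Adj := hP.isChain.prefix ⟨y :: R, by simp⟩
    have hyR : ([y] ++ R).IsChain G.Adj := hP.isChain.suffix ⟨A ++ [x], by simp⟩
    have h₁ : (A ++ [x] ++ Q ++ [y]).IsChain G.Adj := by
      simpa using hAx.append_overlap (l₃ := Q ++ [y]) (by simpa using hch) (cons_ne_nil _ _)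
    simpa using h₁.append_overlap hyR (cons_ne_nil _ _)
  simpa using hP.length_le _ hn hc

theorem containsSubdividedClaw_of_detour {D : List V} (hn : (A ++ c :: B).Nodup)
    (hc : (A ++ c :: B).IsChain G.Adj) (hA : A ≠ []) (hQP : ∀ q ∈ Q, q ∉ A ++ c :: B)
    (hQ : Q.Nodup) (hQne : Q ≠ []) (hD : D <:+ B.drop 6) (hD2 : 2 ≤ D.length)
    (hQD : (c :: (Q ++ D)).IsChain G.Adj) : ContainsSubdividedClaw G 1 3 6 := by
  have hcA : (c :: A.reverse).IsChain G.Adj := by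
    rw [append_cons] at hc
    simpa using isChain_adj_reverse.2 hc.left_of_append
  have hhost : (c :: (A.reverse ++ (Q ++ B.drop 6) ++ B.take 6)).Nodup := by
    rw [← take_append_drop 6 B] at hn hQP
    simp only [nodup_cons, nodup_append, mem_append, mem_cons, mem_reverse, nodup_reverse]
      at hn hQP ⊢
    grind
  have := containsSubdividedClaw_of_lists (by simpa using hcA.take 2) (by simpa using hQD.take 4)
    (by simpa using hc.right_of_append.take 7)
    (hhost.sublist ((((take_sublist 1 _).append
      ((take_sublist 3 _).trans (hD.sublist.append_left Q))).append (Sublist.refl _)).cons_cons c))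
  have hQl := length_pos_iff.2 hQne
  have hAl := length_pos_iff.2 hA
  have hDl := hD.length_le
  simp only [length_take, length_reverse, length_append, length_drop] at this hDl
  convert this using 2 <;> omega

theorem IsLongestPath.eq_nil_of_detour_of_length_le_two {d : V} {A' B' : List V}
    (hP : G.IsLongestPath (A ++ c :: B)) (hP' : A ++ c :: B = A' ++ d :: B') (hcd : c ≠ d)
    (hA : 1 ≤ A.length ∧ A.length ≤ 2) (hA' : 1 ≤ A'.length ∧ A'.length ≤ 2)
    (hQP : ∀ q ∈ Q, q ∉ A ++ c :: B) (hQ : Q.Nodup) (hch : (c :: (Q ++ [d])).IsChain G.Adj) :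
    Q = [] := by
  rcases A with _ | ⟨a₁, _ | ⟨a₂, _ | ⟨a₃, A⟩⟩⟩ <;>
    rcases A' with _ | ⟨b₁, _ | ⟨b₂, _ | ⟨b₃, A'⟩⟩⟩ <;>
    simp only [length_nil, length_cons] at hA hA' <;> try omega
  all_goals simp only [cons_append, nil_append, cons.injEq] at hP'
  · exact absurd hP'.2.1 hcd
  · obtain ⟨rfl, rfl, rfl⟩ := hP'
    exact hP.eq_nil_of_detour hQP hQ hch
  · obtain ⟨rfl, h, rfl⟩ := hP'
    subst a₂
    have hch' : (d :: (Q.reverse ++ [c])).IsChain G.Adj := by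
      simpa using isChain_adj_reverse.2 hch
    simpa using hP.eq_nil_of_detour (A := [a₁]) (by simpa using hQP) (nodup_reverse.2 hQ) hch'
  · exact absurd hP'.2.2.1 hcd

theorem exists_isPath_not_mem_support {u v : V} (hcut : (G.induce {x | x ≠ c}).Connected)
    (hu : u ≠ c) (hv : v ≠ c) : ∃ p : G.Walk u v, p.IsPath ∧ c ∉ p.support := by
  classical
  obtain ⟨p, hp⟩ := (hcut.preconnected ⟨u, hu⟩ ⟨v, hv⟩).some.toPath
  refine ⟨p.map (Embedding.induce _).toHom, hp.map (Embedding.induce (G := G) _).injective,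
    fun h => ?_⟩
  obtain ⟨x, -, hx⟩ := mem_map.1 (Walk.support_map _ p ▸ h :)
  exact x.2 hx

theorem exists_detour (hcut : (G.induce {x | x ≠ c}).Connected) (hcw : G.Adj c w) (hw : w ∉ P)
    {a : V} (ha : a ∈ P) (hac : a ≠ c) :
    ∃ Q d, Q ≠ [] ∧ Q.Nodup ∧ (∀ q ∈ Q, q ∉ P) ∧ d ∈ P ∧ d ≠ c ∧
      (c :: (Q ++ [d])).IsChain G.Adj := by
  classical
  obtain ⟨p, hp, hcp⟩ := exists_isPath_not_mem_support hcut hcw.ne.symm hac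
  obtain ⟨d, Q, R, hQP, hdP, hsupp, -⟩ :=
    exists_of_eraseP (p := fun x => decide (x ∈ P)) p.end_mem_support (by simpa using ha)
  simp only [decide_eq_true_eq] at hQP hdP
  refine ⟨Q, d, ?_, (hsupp ▸ hp.support_nodup).sublist (sublist_append_left _ _), hQP, hdP,
    ?_, (p.cons hcw).isChain_adj_support.prefix ⟨R, by simp [Walk.support_cons, hsupp]⟩⟩
  · rintro rfl
    have h := p.cons_tail_support
    rw [hsupp] at h
    exact hw ((cons.inj h).1 ▸ hdP)
  · rintro rfl
    exact hcp (hsupp ▸ by simp)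

theorem IsLongestPath.not_adj_of_length_le_two (hP : G.IsLongestPath (A ++ c :: B))
    (hfree : ¬ ContainsSubdividedClaw G 1 3 6) (hcut : (G.induce {x | x ≠ c}).Connected)
    (hlen : 11 ≤ A.length + B.length) (hA : 1 ≤ A.length ∧ A.length ≤ 2)
    (hw : w ∉ A ++ c :: B) : ¬ G.Adj c w := by
  intro hcw
  obtain ⟨a, haA⟩ := exists_mem_of_length_pos hA.1
  have hac : a ≠ c := by
    rintro rfl
    exact (nodup_append.1 hP.nodup).2.2 a haA a mem_cons_self rfl
  obtain ⟨Q, d, hQne, hQ, hQP, hdP, hdc, hcQd⟩ :=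
    exists_detour hcut hcw hw (mem_append_left _ haA) hac
  obtain ⟨A', B', hP'⟩ := append_of_mem hdP
  have hQd : G.Adj d (Q.getLast hQne) :=
    (hcQd.tail.rel_getLast_head_of_append hQne (cons_ne_nil _ _)).symm
  have hlen' : 11 ≤ A'.length + B'.length := by
    have := congrArg length hP'
    simp only [length_append, length_cons] at this
    omega
  have hPd : G.IsLongestPath (A' ++ d :: B') := hP' ▸ hP
  rcases hPd.near_end_of_adj hfree hlen' (hP' ▸ hQP _ (getLast_mem hQne)) hQd with hA' | hB'
  · exact hQne (hP.eq_nil_of_detour_of_length_le_two hP' hdc.symm hA hA' hQP hQ hcQd)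
  · have hdB : d :: B' <:+ B.drop 6 :=
      suffix_of_suffix_length_le ⟨A', hP'.symm⟩ ((drop_suffix 6 B).trans ⟨A ++ [c], by simp⟩)
        (by simp; omega)
    have hdB' : ([d] ++ B').IsChain G.Adj := hP.isChain.suffix ⟨A', hP'.symm⟩
    exact hfree (containsSubdividedClaw_of_detour hP.nodup hP.isChain
      (ne_nil_of_length_pos hA.1) hQP hQ hQne hdB (by simp; omega)
      (by simpa using hcQd.append_overlap (l₁ := c :: Q) hdB' (cons_ne_nil _ _)))

theorem Connected.exists_adj_not_mem (hG : G.Connected) {S : Set V} {u v : V} (hu : u ∈ S)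
    (hv : v ∉ S) : ∃ x ∈ S, ∃ y ∉ S, G.Adj x y := by
  obtain ⟨d, -, hd₁, hd₂⟩ := (hG.preconnected u v).some.exists_boundary_dart S hu hv
  exact ⟨_, hd₁, _, hd₂, d.adj⟩

end SimpleGraph

/-- If `G` is 2-connected and `S_{1,3,6}`-subgraph-free, and a longest path of `G` has
exactly `r ≥ 12` vertices, then every vertex of `G` lies on the path. -/
theorem stmt13 {V : Type*} (G : SimpleGraph V) (h2c : TwoConnected G)
    (hfree : ¬ ContainsSubdividedClaw G 1 3 6)
    (r : ℕ) (hr : 12 ≤ r) (f : Fin r → V) (hP : IsPathEmb G r f)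
    (hlong : ¬ ContainsPathOn G (r + 1)) :
    ∀ v : V, v ∈ Set.range f := by
  intro v
  by_contra hv
  obtain ⟨c, hc, w, hw, hcw⟩ := h2c.2.1.exists_adj_not_mem
    (S := {x | x ∈ ofFn f}) (mem_ofFn.2 ⟨⟨0, by omega⟩, rfl⟩) (by simpa using hv)
  obtain ⟨A, B, hAB⟩ := append_of_mem hc
  have hPl : G.IsLongestPath (A ++ c :: B) := hAB ▸ SimpleGraph.isLongestPath_ofFn hP hlong
  have hlen : 11 ≤ A.length + B.length := by
    have := congrArg length hAB
    simp only [length_ofFn, length_append, length_cons] at this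
    omega
  rw [hAB] at hw
  rcases hPl.near_end_of_adj hfree hlen hw hcw with hA | hB
  · exact hPl.not_adj_of_length_le_two hfree (h2c.2.2 c) hlen hA hw hcw
  · have hPr : G.IsLongestPath (B.reverse ++ c :: A.reverse) := by simpa using hPl.reverse
    exact hPr.not_adj_of_length_le_two hfree (h2c.2.2 c) (by simp; omega) (by simpa using hB)
      (by simp at hw ⊢; tauto) hcw
end

section
/- Let G be a 2-connected graph containing no subgraph isomorphic to S_{1,3,6}, and suppose a longest path P = (v_1,...,v_11) of G has exactly 11 vertices. Then every connected component of G − V(P) has at most 2 vertices, and each component of size exactly 2 is adjacent to exactly two vertices of P, both lying in {v_3, v_6, v_9}. -/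
namespace Stmt15Aux

variable {V : Type*} {G : SimpleGraph V} {f : Fin 11 → V}

/-- vertex pool: the 11 path vertices followed by `m` extra vertices. -/
def pl (m : ℕ) (f : Fin 11 → V) (g : Fin m → V) : Fin (11 + m) → V :=
  fun i => if h : (i : ℕ) < 11 then f ⟨i, h⟩ else g ⟨(i : ℕ) - 11, by omega⟩

lemma pl_inj {m : ℕ} {g : Fin m → V} (hf : Function.Injective f)
    (hg : Function.Injective g) (hd : ∀ i j, f i ≠ g j) :
    Function.Injective (pl m f g) := by
  rintro ⟨i, hi⟩ ⟨j, hj⟩ hij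
  simp only [Fin.mk.injEq]
  dsimp only [pl] at hij
  split_ifs at hij with h1 h2 h2
  · exact congrArg Fin.val (hf hij)
  · exact absurd hij (hd _ _)
  · exact absurd hij.symm (hd _ _)
  · have := congrArg Fin.val (hg hij)
    simp only [Fin.val_mk] at this
    omega

lemma pathOn_comp {n r : ℕ} (w : Fin n → V) (hw : Function.Injective w)
    (σ : Fin r → Fin n) (hσ : Function.Injective σ)
    (h : ∀ (i : ℕ) (hi : i + 1 < r),
      G.Adj (w (σ ⟨i, Nat.lt_of_succ_lt hi⟩)) (w (σ ⟨i + 1, hi⟩))) :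
    ContainsPathOn G r :=
  ⟨w ∘ σ, hw.comp hσ, h⟩

lemma claw_comp {n : ℕ} (w : Fin n → V) (hw : Function.Injective w)
    (s1 : Fin 2 → Fin n) (s2 : Fin 4 → Fin n) (s3 : Fin 7 → Fin n)
    (h12 : s1 0 = s2 0) (h23 : s2 0 = s3 0)
    (hi1 : Function.Injective s1) (hi2 : Function.Injective s2)
    (hi3 : Function.Injective s3)
    (hd12 : ∀ i j, s1 i = s2 j → i = 0 ∧ j = 0)
    (hd13 : ∀ i j, s1 i = s3 j → i = 0 ∧ j = 0)
    (hd23 : ∀ i j, s2 i = s3 j → i = 0 ∧ j = 0)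
    (a1 : ∀ (i : ℕ) (hi : i + 1 < 2),
      G.Adj (w (s1 ⟨i, Nat.lt_of_succ_lt hi⟩)) (w (s1 ⟨i + 1, hi⟩)))
    (a2 : ∀ (i : ℕ) (hi : i + 1 < 4),
      G.Adj (w (s2 ⟨i, Nat.lt_of_succ_lt hi⟩)) (w (s2 ⟨i + 1, hi⟩)))
    (a3 : ∀ (i : ℕ) (hi : i + 1 < 7),
      G.Adj (w (s3 ⟨i, Nat.lt_of_succ_lt hi⟩)) (w (s3 ⟨i + 1, hi⟩))) :
    ContainsSubdividedClaw G 1 3 6 :=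
  ⟨w ∘ s1, w ∘ s2, w ∘ s3, congrArg w h12, congrArg w h23,
    ⟨hw.comp hi1, a1⟩, ⟨hw.comp hi2, a2⟩, ⟨hw.comp hi3, a3⟩,
    fun i j h => hd12 i j (hw h), fun i j h => hd13 i j (hw h),
    fun i j h => hd23 i j (hw h)⟩

lemma certE0 (hf : Function.Injective f)
    (hadjP : ∀ (i : ℕ) (hi : i + 1 < 11), G.Adj (f ⟨i, Nat.lt_of_succ_lt hi⟩) (f ⟨i + 1, hi⟩))
    {s : V} (hs : s ∉ Set.range f) (e1 : G.Adj s (f 0)) :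
    ContainsPathOn G 12 := by
  have hw : Function.Injective (pl 1 f ![s]) :=
    pl_inj hf (fun i j _ => Subsingleton.elim i j)
      (by intro i j; fin_cases j <;> first | exact fun h => hs ⟨i, h⟩)
  refine pathOn_comp (pl 1 f ![s]) hw (![11,0,1,2,3,4,5,6,7,8,9,10] : Fin 12 → Fin (11 + 1)) (by decide) ?_
  intro i hi
  match i, hi with
  | 0, _ => exact e1
  | 1, _ => exact hadjP 0 (by omega)
  | 2, _ => exact hadjP 1 (by omega)
  | 3, _ => exact hadjP 2 (by omega)
  | 4, _ => exact hadjP 3 (by omega)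
  | 5, _ => exact hadjP 4 (by omega)
  | 6, _ => exact hadjP 5 (by omega)
  | 7, _ => exact hadjP 6 (by omega)
  | 8, _ => exact hadjP 7 (by omega)
  | 9, _ => exact hadjP 8 (by omega)
  | 10, _ => exact hadjP 9 (by omega)
  | (n + 11), h => exact absurd h (by omega)

lemma certE10 (hf : Function.Injective f)
    (hadjP : ∀ (i : ℕ) (hi : i + 1 < 11), G.Adj (f ⟨i, Nat.lt_of_succ_lt hi⟩) (f ⟨i + 1, hi⟩))
    {s : V} (hs : s ∉ Set.range f) (e1 : G.Adj s (f 10)) :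
    ContainsPathOn G 12 := by
  have hw : Function.Injective (pl 1 f ![s]) :=
    pl_inj hf (fun i j _ => Subsingleton.elim i j)
      (by intro i j; fin_cases j <;> first | exact fun h => hs ⟨i, h⟩)
  refine pathOn_comp (pl 1 f ![s]) hw (![11,10,9,8,7,6,5,4,3,2,1,0] : Fin 12 → Fin (11 + 1)) (by decide) ?_
  intro i hi
  match i, hi with
  | 0, _ => exact e1
  | 1, _ => exact (hadjP 9 (by omega)).symm
  | 2, _ => exact (hadjP 8 (by omega)).symm
  | 3, _ => exact (hadjP 7 (by omega)).symm
  | 4, _ => exact (hadjP 6 (by omega)).symm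
  | 5, _ => exact (hadjP 5 (by omega)).symm
  | 6, _ => exact (hadjP 4 (by omega)).symm
  | 7, _ => exact (hadjP 3 (by omega)).symm
  | 8, _ => exact (hadjP 2 (by omega)).symm
  | 9, _ => exact (hadjP 1 (by omega)).symm
  | 10, _ => exact (hadjP 0 (by omega)).symm
  | (n + 11), h => exact absurd h (by omega)

lemma certK3 (hf : Function.Injective f)
    (hadjP : ∀ (i : ℕ) (hi : i + 1 < 11), G.Adj (f ⟨i, Nat.lt_of_succ_lt hi⟩) (f ⟨i + 1, hi⟩))
    {s : V} (hs : s ∉ Set.range f) (e1 : G.Adj s (f 3)) :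
    ContainsSubdividedClaw G 1 3 6 := by
  have hw : Function.Injective (pl 1 f ![s]) :=
    pl_inj hf (fun i j _ => Subsingleton.elim i j)
      (by intro i j; fin_cases j <;> first | exact fun h => hs ⟨i, h⟩)
  refine claw_comp (pl 1 f ![s]) hw (![3,11] : Fin 2 → Fin (11 + 1))
    (![3,2,1,0] : Fin 4 → Fin (11 + 1)) (![3,4,5,6,7,8,9] : Fin 7 → Fin (11 + 1))
    (by decide) (by decide) (by decide) (by decide) (by decide) (by decide)
    (by decide) (by decide) ?_ ?_ ?_
  · intro i hi
    match i, hi with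
    | 0, _ => exact e1.symm
    | (n + 1), h => exact absurd h (by omega)
  · intro i hi
    match i, hi with
    | 0, _ => exact (hadjP 2 (by omega)).symm
    | 1, _ => exact (hadjP 1 (by omega)).symm
    | 2, _ => exact (hadjP 0 (by omega)).symm
    | (n + 3), h => exact absurd h (by omega)
  · intro i hi
    match i, hi with
    | 0, _ => exact hadjP 3 (by omega)
    | 1, _ => exact hadjP 4 (by omega)
    | 2, _ => exact hadjP 5 (by omega)
    | 3, _ => exact hadjP 6 (by omega)
    | 4, _ => exact hadjP 7 (by omega)
    | 5, _ => exact hadjP 8 (by omega)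
    | (n + 6), h => exact absurd h (by omega)

lemma certK4 (hf : Function.Injective f)
    (hadjP : ∀ (i : ℕ) (hi : i + 1 < 11), G.Adj (f ⟨i, Nat.lt_of_succ_lt hi⟩) (f ⟨i + 1, hi⟩))
    {s : V} (hs : s ∉ Set.range f) (e1 : G.Adj s (f 4)) :
    ContainsSubdividedClaw G 1 3 6 := by
  have hw : Function.Injective (pl 1 f ![s]) :=
    pl_inj hf (fun i j _ => Subsingleton.elim i j)
      (by intro i j; fin_cases j <;> first | exact fun h => hs ⟨i, h⟩)
  refine claw_comp (pl 1 f ![s]) hw (![4,11] : Fin 2 → Fin (11 + 1))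
    (![4,3,2,1] : Fin 4 → Fin (11 + 1)) (![4,5,6,7,8,9,10] : Fin 7 → Fin (11 + 1))
    (by decide) (by decide) (by decide) (by decide) (by decide) (by decide)
    (by decide) (by decide) ?_ ?_ ?_
  · intro i hi
    match i, hi with
    | 0, _ => exact e1.symm
    | (n + 1), h => exact absurd h (by omega)
  · intro i hi
    match i, hi with
    | 0, _ => exact (hadjP 3 (by omega)).symm
    | 1, _ => exact (hadjP 2 (by omega)).symm
    | 2, _ => exact (hadjP 1 (by omega)).symm
    | (n + 3), h => exact absurd h (by omega)
  · intro i hi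
    match i, hi with
    | 0, _ => exact hadjP 4 (by omega)
    | 1, _ => exact hadjP 5 (by omega)
    | 2, _ => exact hadjP 6 (by omega)
    | 3, _ => exact hadjP 7 (by omega)
    | 4, _ => exact hadjP 8 (by omega)
    | 5, _ => exact hadjP 9 (by omega)
    | (n + 6), h => exact absurd h (by omega)

lemma certK6 (hf : Function.Injective f)
    (hadjP : ∀ (i : ℕ) (hi : i + 1 < 11), G.Adj (f ⟨i, Nat.lt_of_succ_lt hi⟩) (f ⟨i + 1, hi⟩))
    {s : V} (hs : s ∉ Set.range f) (e1 : G.Adj s (f 6)) :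
    ContainsSubdividedClaw G 1 3 6 := by
  have hw : Function.Injective (pl 1 f ![s]) :=
    pl_inj hf (fun i j _ => Subsingleton.elim i j)
      (by intro i j; fin_cases j <;> first | exact fun h => hs ⟨i, h⟩)
  refine claw_comp (pl 1 f ![s]) hw (![6,11] : Fin 2 → Fin (11 + 1))
    (![6,7,8,9] : Fin 4 → Fin (11 + 1)) (![6,5,4,3,2,1,0] : Fin 7 → Fin (11 + 1))
    (by decide) (by decide) (by decide) (by decide) (by decide) (by decide)
    (by decide) (by decide) ?_ ?_ ?_
  · intro i hi
    match i, hi with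
    | 0, _ => exact e1.symm
    | (n + 1), h => exact absurd h (by omega)
  · intro i hi
    match i, hi with
    | 0, _ => exact hadjP 6 (by omega)
    | 1, _ => exact hadjP 7 (by omega)
    | 2, _ => exact hadjP 8 (by omega)
    | (n + 3), h => exact absurd h (by omega)
  · intro i hi
    match i, hi with
    | 0, _ => exact (hadjP 5 (by omega)).symm
    | 1, _ => exact (hadjP 4 (by omega)).symm
    | 2, _ => exact (hadjP 3 (by omega)).symm
    | 3, _ => exact (hadjP 2 (by omega)).symm
    | 4, _ => exact (hadjP 1 (by omega)).symm
    | 5, _ => exact (hadjP 0 (by omega)).symm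
    | (n + 6), h => exact absurd h (by omega)

lemma certK7 (hf : Function.Injective f)
    (hadjP : ∀ (i : ℕ) (hi : i + 1 < 11), G.Adj (f ⟨i, Nat.lt_of_succ_lt hi⟩) (f ⟨i + 1, hi⟩))
    {s : V} (hs : s ∉ Set.range f) (e1 : G.Adj s (f 7)) :
    ContainsSubdividedClaw G 1 3 6 := by
  have hw : Function.Injective (pl 1 f ![s]) :=
    pl_inj hf (fun i j _ => Subsingleton.elim i j)
      (by intro i j; fin_cases j <;> first | exact fun h => hs ⟨i, h⟩)
  refine claw_comp (pl 1 f ![s]) hw (![7,11] : Fin 2 → Fin (11 + 1))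
    (![7,8,9,10] : Fin 4 → Fin (11 + 1)) (![7,6,5,4,3,2,1] : Fin 7 → Fin (11 + 1))
    (by decide) (by decide) (by decide) (by decide) (by decide) (by decide)
    (by decide) (by decide) ?_ ?_ ?_
  · intro i hi
    match i, hi with
    | 0, _ => exact e1.symm
    | (n + 1), h => exact absurd h (by omega)
  · intro i hi
    match i, hi with
    | 0, _ => exact hadjP 7 (by omega)
    | 1, _ => exact hadjP 8 (by omega)
    | 2, _ => exact hadjP 9 (by omega)
    | (n + 3), h => exact absurd h (by omega)
  · intro i hi
    match i, hi with
    | 0, _ => exact (hadjP 6 (by omega)).symm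
    | 1, _ => exact (hadjP 5 (by omega)).symm
    | 2, _ => exact (hadjP 4 (by omega)).symm
    | 3, _ => exact (hadjP 3 (by omega)).symm
    | 4, _ => exact (hadjP 2 (by omega)).symm
    | 5, _ => exact (hadjP 1 (by omega)).symm
    | (n + 6), h => exact absurd h (by omega)

lemma certE1 (hf : Function.Injective f)
    (hadjP : ∀ (i : ℕ) (hi : i + 1 < 11), G.Adj (f ⟨i, Nat.lt_of_succ_lt hi⟩) (f ⟨i + 1, hi⟩))
    {s t : V} (hs : s ∉ Set.range f) (ht : t ∉ Set.range f) (hst : s ≠ t) (e1 : G.Adj s t) (e2 : G.Adj s (f 1)) :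
    ContainsPathOn G 12 := by
  have hw : Function.Injective (pl 2 f ![s,t]) :=
    pl_inj hf (by intro i j h; fin_cases i <;> fin_cases j <;> simp_all)
      (by intro i j; fin_cases j <;> first | exact fun h => hs ⟨i, h⟩ | exact fun h => ht ⟨i, h⟩)
  refine pathOn_comp (pl 2 f ![s,t]) hw (![12,11,1,2,3,4,5,6,7,8,9,10] : Fin 12 → Fin (11 + 2)) (by decide) ?_
  intro i hi
  match i, hi with
  | 0, _ => exact e1.symm
  | 1, _ => exact e2
  | 2, _ => exact hadjP 1 (by omega)
  | 3, _ => exact hadjP 2 (by omega)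
  | 4, _ => exact hadjP 3 (by omega)
  | 5, _ => exact hadjP 4 (by omega)
  | 6, _ => exact hadjP 5 (by omega)
  | 7, _ => exact hadjP 6 (by omega)
  | 8, _ => exact hadjP 7 (by omega)
  | 9, _ => exact hadjP 8 (by omega)
  | 10, _ => exact hadjP 9 (by omega)
  | (n + 11), h => exact absurd h (by omega)

lemma certE9 (hf : Function.Injective f)
    (hadjP : ∀ (i : ℕ) (hi : i + 1 < 11), G.Adj (f ⟨i, Nat.lt_of_succ_lt hi⟩) (f ⟨i + 1, hi⟩))
    {s t : V} (hs : s ∉ Set.range f) (ht : t ∉ Set.range f) (hst : s ≠ t) (e1 : G.Adj s t) (e2 : G.Adj s (f 9)) :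
    ContainsPathOn G 12 := by
  have hw : Function.Injective (pl 2 f ![s,t]) :=
    pl_inj hf (by intro i j h; fin_cases i <;> fin_cases j <;> simp_all)
      (by intro i j; fin_cases j <;> first | exact fun h => hs ⟨i, h⟩ | exact fun h => ht ⟨i, h⟩)
  refine pathOn_comp (pl 2 f ![s,t]) hw (![12,11,9,8,7,6,5,4,3,2,1,0] : Fin 12 → Fin (11 + 2)) (by decide) ?_
  intro i hi
  match i, hi with
  | 0, _ => exact e1.symm
  | 1, _ => exact e2
  | 2, _ => exact (hadjP 8 (by omega)).symm
  | 3, _ => exact (hadjP 7 (by omega)).symm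
  | 4, _ => exact (hadjP 6 (by omega)).symm
  | 5, _ => exact (hadjP 5 (by omega)).symm
  | 6, _ => exact (hadjP 4 (by omega)).symm
  | 7, _ => exact (hadjP 3 (by omega)).symm
  | 8, _ => exact (hadjP 2 (by omega)).symm
  | 9, _ => exact (hadjP 1 (by omega)).symm
  | 10, _ => exact (hadjP 0 (by omega)).symm
  | (n + 11), h => exact absurd h (by omega)

lemma clawA (hf : Function.Injective f)
    (hadjP : ∀ (i : ℕ) (hi : i + 1 < 11), G.Adj (f ⟨i, Nat.lt_of_succ_lt hi⟩) (f ⟨i + 1, hi⟩))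
    {v w : V} (hv : v ∉ Set.range f) (hw : w ∉ Set.range f) (hvw : v ≠ w) (e1 : G.Adj v w) (e2 : G.Adj v (f 2)) (e3 : G.Adj v (f 5)) :
    ContainsSubdividedClaw G 1 3 6 := by
  have hw : Function.Injective (pl 2 f ![v,w]) :=
    pl_inj hf (by intro i j h; fin_cases i <;> fin_cases j <;> simp_all)
      (by intro i j; fin_cases j <;> first | exact fun h => hv ⟨i, h⟩ | exact fun h => hw ⟨i, h⟩)
  refine claw_comp (pl 2 f ![v,w]) hw (![11,12] : Fin 2 → Fin (11 + 2))
    (![11,2,1,0] : Fin 4 → Fin (11 + 2)) (![11,5,6,7,8,9,10] : Fin 7 → Fin (11 + 2))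
    (by decide) (by decide) (by decide) (by decide) (by decide) (by decide)
    (by decide) (by decide) ?_ ?_ ?_
  · intro i hi
    match i, hi with
    | 0, _ => exact e1
    | (n + 1), h => exact absurd h (by omega)
  · intro i hi
    match i, hi with
    | 0, _ => exact e2
    | 1, _ => exact (hadjP 1 (by omega)).symm
    | 2, _ => exact (hadjP 0 (by omega)).symm
    | (n + 3), h => exact absurd h (by omega)
  · intro i hi
    match i, hi with
    | 0, _ => exact e3
    | 1, _ => exact hadjP 5 (by omega)
    | 2, _ => exact hadjP 6 (by omega)
    | 3, _ => exact hadjP 7 (by omega)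
    | 4, _ => exact hadjP 8 (by omega)
    | 5, _ => exact hadjP 9 (by omega)
    | (n + 6), h => exact absurd h (by omega)

lemma clawB (hf : Function.Injective f)
    (hadjP : ∀ (i : ℕ) (hi : i + 1 < 11), G.Adj (f ⟨i, Nat.lt_of_succ_lt hi⟩) (f ⟨i + 1, hi⟩))
    {v w : V} (hv : v ∉ Set.range f) (hw : w ∉ Set.range f) (hvw : v ≠ w) (e1 : G.Adj v w) (e2 : G.Adj v (f 8)) (e3 : G.Adj v (f 5)) :
    ContainsSubdividedClaw G 1 3 6 := by
  have hw : Function.Injective (pl 2 f ![v,w]) :=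
    pl_inj hf (by intro i j h; fin_cases i <;> fin_cases j <;> simp_all)
      (by intro i j; fin_cases j <;> first | exact fun h => hv ⟨i, h⟩ | exact fun h => hw ⟨i, h⟩)
  refine claw_comp (pl 2 f ![v,w]) hw (![11,12] : Fin 2 → Fin (11 + 2))
    (![11,8,9,10] : Fin 4 → Fin (11 + 2)) (![11,5,4,3,2,1,0] : Fin 7 → Fin (11 + 2))
    (by decide) (by decide) (by decide) (by decide) (by decide) (by decide)
    (by decide) (by decide) ?_ ?_ ?_
  · intro i hi
    match i, hi with
    | 0, _ => exact e1
    | (n + 1), h => exact absurd h (by omega)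
  · intro i hi
    match i, hi with
    | 0, _ => exact e2
    | 1, _ => exact hadjP 8 (by omega)
    | 2, _ => exact hadjP 9 (by omega)
    | (n + 3), h => exact absurd h (by omega)
  · intro i hi
    match i, hi with
    | 0, _ => exact e3
    | 1, _ => exact (hadjP 4 (by omega)).symm
    | 2, _ => exact (hadjP 3 (by omega)).symm
    | 3, _ => exact (hadjP 2 (by omega)).symm
    | 4, _ => exact (hadjP 1 (by omega)).symm
    | 5, _ => exact (hadjP 0 (by omega)).symm
    | (n + 6), h => exact absurd h (by omega)

lemma clawC (hf : Function.Injective f)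
    (hadjP : ∀ (i : ℕ) (hi : i + 1 < 11), G.Adj (f ⟨i, Nat.lt_of_succ_lt hi⟩) (f ⟨i + 1, hi⟩))
    {v w : V} (hv : v ∉ Set.range f) (hw : w ∉ Set.range f) (hvw : v ≠ w) (e1 : G.Adj v w) (e2 : G.Adj v (f 2)) (e3 : G.Adj v (f 8)) :
    ContainsSubdividedClaw G 1 3 6 := by
  have hw : Function.Injective (pl 2 f ![v,w]) :=
    pl_inj hf (by intro i j h; fin_cases i <;> fin_cases j <;> simp_all)
      (by intro i j; fin_cases j <;> first | exact fun h => hv ⟨i, h⟩ | exact fun h => hw ⟨i, h⟩)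
  refine claw_comp (pl 2 f ![v,w]) hw (![11,12] : Fin 2 → Fin (11 + 2))
    (![11,2,1,0] : Fin 4 → Fin (11 + 2)) (![11,8,7,6,5,4,3] : Fin 7 → Fin (11 + 2))
    (by decide) (by decide) (by decide) (by decide) (by decide) (by decide)
    (by decide) (by decide) ?_ ?_ ?_
  · intro i hi
    match i, hi with
    | 0, _ => exact e1
    | (n + 1), h => exact absurd h (by omega)
  · intro i hi
    match i, hi with
    | 0, _ => exact e2
    | 1, _ => exact (hadjP 1 (by omega)).symm
    | 2, _ => exact (hadjP 0 (by omega)).symm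
    | (n + 3), h => exact absurd h (by omega)
  · intro i hi
    match i, hi with
    | 0, _ => exact e3
    | 1, _ => exact (hadjP 7 (by omega)).symm
    | 2, _ => exact (hadjP 6 (by omega)).symm
    | 3, _ => exact (hadjP 5 (by omega)).symm
    | 4, _ => exact (hadjP 4 (by omega)).symm
    | 5, _ => exact (hadjP 3 (by omega)).symm
    | (n + 6), h => exact absurd h (by omega)

lemma certC1 (hf : Function.Injective f)
    (hadjP : ∀ (i : ℕ) (hi : i + 1 < 11), G.Adj (f ⟨i, Nat.lt_of_succ_lt hi⟩) (f ⟨i + 1, hi⟩))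
    {p q r : V} (hp : p ∉ Set.range f) (hq : q ∉ Set.range f) (hr : r ∉ Set.range f) (hpq : p ≠ q) (hpr : p ≠ r) (hqr : q ≠ r) (e1 : G.Adj (f 2) p) (e2 : G.Adj p q) (e3 : G.Adj q r) :
    ContainsPathOn G 12 := by
  have hw : Function.Injective (pl 3 f ![p,q,r]) :=
    pl_inj hf (by intro i j h; fin_cases i <;> fin_cases j <;> simp_all)
      (by intro i j; fin_cases j <;> first | exact fun h => hp ⟨i, h⟩ | exact fun h => hq ⟨i, h⟩ | exact fun h => hr ⟨i, h⟩)
  refine pathOn_comp (pl 3 f ![p,q,r]) hw (![10,9,8,7,6,5,4,3,2,11,12,13] : Fin 12 → Fin (11 + 3)) (by decide) ?_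
  intro i hi
  match i, hi with
  | 0, _ => exact (hadjP 9 (by omega)).symm
  | 1, _ => exact (hadjP 8 (by omega)).symm
  | 2, _ => exact (hadjP 7 (by omega)).symm
  | 3, _ => exact (hadjP 6 (by omega)).symm
  | 4, _ => exact (hadjP 5 (by omega)).symm
  | 5, _ => exact (hadjP 4 (by omega)).symm
  | 6, _ => exact (hadjP 3 (by omega)).symm
  | 7, _ => exact (hadjP 2 (by omega)).symm
  | 8, _ => exact e1
  | 9, _ => exact e2
  | 10, _ => exact e3
  | (n + 11), h => exact absurd h (by omega)

lemma certC2 (hf : Function.Injective f)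
    (hadjP : ∀ (i : ℕ) (hi : i + 1 < 11), G.Adj (f ⟨i, Nat.lt_of_succ_lt hi⟩) (f ⟨i + 1, hi⟩))
    {p q r : V} (hp : p ∉ Set.range f) (hq : q ∉ Set.range f) (hr : r ∉ Set.range f) (hpq : p ≠ q) (hpr : p ≠ r) (hqr : q ≠ r) (e1 : G.Adj (f 8) p) (e2 : G.Adj p q) (e3 : G.Adj q r) :
    ContainsPathOn G 12 := by
  have hw : Function.Injective (pl 3 f ![p,q,r]) :=
    pl_inj hf (by intro i j h; fin_cases i <;> fin_cases j <;> simp_all)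
      (by intro i j; fin_cases j <;> first | exact fun h => hp ⟨i, h⟩ | exact fun h => hq ⟨i, h⟩ | exact fun h => hr ⟨i, h⟩)
  refine pathOn_comp (pl 3 f ![p,q,r]) hw (![0,1,2,3,4,5,6,7,8,11,12,13] : Fin 12 → Fin (11 + 3)) (by decide) ?_
  intro i hi
  match i, hi with
  | 0, _ => exact hadjP 0 (by omega)
  | 1, _ => exact hadjP 1 (by omega)
  | 2, _ => exact hadjP 2 (by omega)
  | 3, _ => exact hadjP 3 (by omega)
  | 4, _ => exact hadjP 4 (by omega)
  | 5, _ => exact hadjP 5 (by omega)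
  | 6, _ => exact hadjP 6 (by omega)
  | 7, _ => exact hadjP 7 (by omega)
  | 8, _ => exact e1
  | 9, _ => exact e2
  | 10, _ => exact e3
  | (n + 11), h => exact absurd h (by omega)

lemma certC3 (hf : Function.Injective f)
    (hadjP : ∀ (i : ℕ) (hi : i + 1 < 11), G.Adj (f ⟨i, Nat.lt_of_succ_lt hi⟩) (f ⟨i + 1, hi⟩))
    {p q r : V} (hp : p ∉ Set.range f) (hq : q ∉ Set.range f) (hr : r ∉ Set.range f) (hpq : p ≠ q) (hpr : p ≠ r) (hqr : q ≠ r) (e1 : G.Adj p r) (e2 : G.Adj p (f 2)) (e3 : G.Adj p q) (e4 : G.Adj q (f 5)) :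
    ContainsSubdividedClaw G 1 3 6 := by
  have hw : Function.Injective (pl 3 f ![p,q,r]) :=
    pl_inj hf (by intro i j h; fin_cases i <;> fin_cases j <;> simp_all)
      (by intro i j; fin_cases j <;> first | exact fun h => hp ⟨i, h⟩ | exact fun h => hq ⟨i, h⟩ | exact fun h => hr ⟨i, h⟩)
  refine claw_comp (pl 3 f ![p,q,r]) hw (![11,13] : Fin 2 → Fin (11 + 3))
    (![11,2,1,0] : Fin 4 → Fin (11 + 3)) (![11,12,5,6,7,8,9] : Fin 7 → Fin (11 + 3))
    (by decide) (by decide) (by decide) (by decide) (by decide) (by decide)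
    (by decide) (by decide) ?_ ?_ ?_
  · intro i hi
    match i, hi with
    | 0, _ => exact e1
    | (n + 1), h => exact absurd h (by omega)
  · intro i hi
    match i, hi with
    | 0, _ => exact e2
    | 1, _ => exact (hadjP 1 (by omega)).symm
    | 2, _ => exact (hadjP 0 (by omega)).symm
    | (n + 3), h => exact absurd h (by omega)
  · intro i hi
    match i, hi with
    | 0, _ => exact e3
    | 1, _ => exact e4
    | 2, _ => exact hadjP 5 (by omega)
    | 3, _ => exact hadjP 6 (by omega)
    | 4, _ => exact hadjP 7 (by omega)
    | 5, _ => exact hadjP 8 (by omega)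
    | (n + 6), h => exact absurd h (by omega)

lemma certC4 (hf : Function.Injective f)
    (hadjP : ∀ (i : ℕ) (hi : i + 1 < 11), G.Adj (f ⟨i, Nat.lt_of_succ_lt hi⟩) (f ⟨i + 1, hi⟩))
    {p q r : V} (hp : p ∉ Set.range f) (hq : q ∉ Set.range f) (hr : r ∉ Set.range f) (hpq : p ≠ q) (hpr : p ≠ r) (hqr : q ≠ r) (e1 : G.Adj p r) (e2 : G.Adj p (f 8)) (e3 : G.Adj p q) (e4 : G.Adj q (f 5)) :
    ContainsSubdividedClaw G 1 3 6 := by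
  have hw : Function.Injective (pl 3 f ![p,q,r]) :=
    pl_inj hf (by intro i j h; fin_cases i <;> fin_cases j <;> simp_all)
      (by intro i j; fin_cases j <;> first | exact fun h => hp ⟨i, h⟩ | exact fun h => hq ⟨i, h⟩ | exact fun h => hr ⟨i, h⟩)
  refine claw_comp (pl 3 f ![p,q,r]) hw (![11,13] : Fin 2 → Fin (11 + 3))
    (![11,8,9,10] : Fin 4 → Fin (11 + 3)) (![11,12,5,4,3,2,1] : Fin 7 → Fin (11 + 3))
    (by decide) (by decide) (by decide) (by decide) (by decide) (by decide)
    (by decide) (by decide) ?_ ?_ ?_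
  · intro i hi
    match i, hi with
    | 0, _ => exact e1
    | (n + 1), h => exact absurd h (by omega)
  · intro i hi
    match i, hi with
    | 0, _ => exact e2
    | 1, _ => exact hadjP 8 (by omega)
    | 2, _ => exact hadjP 9 (by omega)
    | (n + 3), h => exact absurd h (by omega)
  · intro i hi
    match i, hi with
    | 0, _ => exact e3
    | 1, _ => exact e4
    | 2, _ => exact (hadjP 4 (by omega)).symm
    | 3, _ => exact (hadjP 3 (by omega)).symm
    | 4, _ => exact (hadjP 2 (by omega)).symm
    | 5, _ => exact (hadjP 1 (by omega)).symm
    | (n + 6), h => exact absurd h (by omega)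

/-- The complement of the path vertices. -/
abbrev ScS (f : Fin 11 → V) : Set V := (Set.range f)ᶜ

/-- The component (in `G − P`) of the vertex `a`. -/
abbrev DD (G : SimpleGraph V) (f : Fin 11 → V) (a : ↥(ScS f)) : Set V :=
  {z | ∃ hz : z ∈ ScS f, (G.induce (ScS f)).Reachable a ⟨z, hz⟩}

/-- Positions on the path adjacent to a vertex outside the path (that itself has a
neighbour outside the path) are among 2, 5, 8. -/
lemma attachPos (hf : Function.Injective f)
    (hadjP : ∀ (i : ℕ) (hi : i + 1 < 11), G.Adj (f ⟨i, Nat.lt_of_succ_lt hi⟩) (f ⟨i + 1, hi⟩))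
    (hfree : ¬ ContainsSubdividedClaw G 1 3 6) (hlong : ¬ ContainsPathOn G 12)
    {s t : V} (hs : s ∉ Set.range f) (ht : t ∉ Set.range f) (hst : G.Adj s t)
    {i : Fin 11} (hsi : G.Adj s (f i)) : i = 2 ∨ i = 5 ∨ i = 8 := by
  have hstn : s ≠ t := G.ne_of_adj hst
  fin_cases i
  · exact absurd (certE0 hf hadjP hs hsi) hlong
  · exact absurd (certE1 hf hadjP hs ht hstn hst hsi) hlong
  · exact Or.inl rfl
  · exact absurd (certK3 hf hadjP hs hsi) hfree
  · exact absurd (certK4 hf hadjP hs hsi) hfree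
  · exact Or.inr (Or.inl rfl)
  · exact absurd (certK6 hf hadjP hs hsi) hfree
  · exact absurd (certK7 hf hadjP hs hsi) hfree
  · exact Or.inr (Or.inr rfl)
  · exact absurd (certE9 hf hadjP hs ht hstn hst hsi) hlong
  · exact absurd (certE10 hf hadjP hs hsi) hlong

lemma noThree (hf : Function.Injective f)
    (hadjP : ∀ (i : ℕ) (hi : i + 1 < 11), G.Adj (f ⟨i, Nat.lt_of_succ_lt hi⟩) (f ⟨i + 1, hi⟩))
    (hfree : ¬ ContainsSubdividedClaw G 1 3 6)
    {a b : V} (ha : a ∉ Set.range f) (hb : b ∉ Set.range f)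
    (hne : a ≠ b) (hab : G.Adj a b)
    (h2 : G.Adj a (f 2) ∨ G.Adj b (f 2)) (h5 : G.Adj a (f 5) ∨ G.Adj b (f 5))
    (h8 : G.Adj a (f 8) ∨ G.Adj b (f 8)) : False := by
  rcases h2 with h2 | h2 <;> rcases h5 with h5 | h5 <;> rcases h8 with h8 | h8
  · exact hfree (clawA hf hadjP ha hb hne hab h2 h5)
  · exact hfree (clawA hf hadjP ha hb hne hab h2 h5)
  · exact hfree (clawC hf hadjP ha hb hne hab h2 h8)
  · exact hfree (clawB hf hadjP hb ha hne.symm hab.symm h8 h5)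
  · exact hfree (clawB hf hadjP ha hb hne hab h8 h5)
  · exact hfree (clawC hf hadjP hb ha hne.symm hab.symm h2 h8)
  · exact hfree (clawA hf hadjP hb ha hne.symm hab.symm h2 h5)
  · exact hfree (clawA hf hadjP hb ha hne.symm hab.symm h2 h5)

lemma crossWalk {c : V} {D : Set V} :
    ∀ {u v : {x : V | x ≠ c}}, (G.induce {x : V | x ≠ c}).Walk u v → (u : V) ∈ D →
      (v : V) ∉ D → ∃ x y : V, x ∈ D ∧ y ∉ D ∧ y ≠ c ∧ G.Adj x y := by
  intro u v w
  induction w with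
  | nil => intro hu hv; exact absurd hu hv
  | @cons x m _ hadj p ih =>
    intro hu hv
    by_cases hm : (m : V) ∈ D
    · exact ih hm hv
    · exact ⟨x, m, hu, hm, m.prop, by simpa using hadj⟩

lemma cross {c : V} (hconn : (G.induce {x : V | x ≠ c}).Connected) {D : Set V} {u v : V}
    (hu : u ≠ c) (hv : v ≠ c) (huD : u ∈ D) (hvD : v ∉ D) :
    ∃ x y : V, x ∈ D ∧ y ∉ D ∧ y ≠ c ∧ G.Adj x y := by
  obtain ⟨w⟩ := hconn.preconnected ⟨u, hu⟩ ⟨v, hv⟩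
  exact crossWalk w huD hvD

lemma firstStep {S' : Set V} {u v : ↥S'} (h : (G.induce S').Reachable u v) (hne : u ≠ v) :
    ∃ y : ↥S', G.Adj ↑u ↑y := by
  obtain ⟨w⟩ := h
  cases w with
  | nil => exact absurd rfl hne
  | cons hadj _ => exact ⟨_, by simpa using hadj⟩

lemma path_head2 {S' : Set V} {u v : ↥S'} (h : (G.induce S').Reachable u v) (hne : u ≠ v)
    (hnadj : ¬ G.Adj ↑u ↑v) :
    ∃ x y : ↥S', G.Adj ↑u ↑x ∧ G.Adj ↑x ↑y ∧ x ≠ u ∧ y ≠ u ∧ x ≠ y ∧ x ≠ v := by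
  classical
  obtain ⟨w0⟩ := h
  obtain ⟨w, hw⟩ := w0.toPath
  cases w with
  | nil => exact absurd rfl hne
  | @cons _ x _ hadj q =>
    cases q with
    | nil => exact absurd (by simpa using hadj) hnadj
    | @cons _ y _ hadj' q' =>
      have hnd := hw.support_nodup
      rw [SimpleGraph.Walk.support_cons, List.nodup_cons] at hnd
      obtain ⟨hu_not, hnd2⟩ := hnd
      rw [SimpleGraph.Walk.support_cons, List.nodup_cons] at hnd2
      obtain ⟨hx_not, _⟩ := hnd2
      have hy_mem : y ∈ (SimpleGraph.Walk.cons hadj' q').support := by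
        rw [SimpleGraph.Walk.support_cons]
        exact List.mem_cons_of_mem _ q'.start_mem_support
      have hv_mem : v ∈ q'.support := q'.end_mem_support
      exact ⟨x, y, by simpa using hadj, by simpa using hadj', hadj.ne.symm,
        fun hh => hu_not (hh ▸ hy_mem), hadj'.ne,
        fun hh => hx_not (hh ▸ hv_mem)⟩

lemma two_attach (hcut : ∀ v : V, (G.induce {u : V | u ≠ v}).Connected)
    (hf : Function.Injective f)
    {D : Set V} (hDS : ∀ x ∈ D, x ∉ Set.range f)
    (hDcl : ∀ x y, x ∈ D → y ∉ Set.range f → G.Adj x y → y ∈ D)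
    {A : V} (hA : A ∈ D) :
    ∃ (x1 x2 : V) (p1 p2 : Fin 11),
      x1 ∈ D ∧ x2 ∈ D ∧ G.Adj x1 (f p1) ∧ G.Adj x2 (f p2) ∧ p1 ≠ p2 := by
  have step : ∀ c : V, c ∉ D → ∀ tgt : Fin 11, f tgt ≠ c →
      ∃ x y : V, x ∈ D ∧ y ∉ D ∧ y ≠ c ∧ G.Adj x y := by
    intro c hcD tgt htgt
    have hAc : A ≠ c := fun h => hcD (h ▸ hA)
    have hftD : f tgt ∉ D := fun h => (hDS _ h) ⟨tgt, rfl⟩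
    exact cross (hcut c) hAc htgt hA hftD
  have h0D : f 0 ∉ D := fun h => hDS _ h ⟨0, rfl⟩
  obtain ⟨x1, y1, hx1, hy1, hy1c, hxy1⟩ :=
    step (f 0) h0D 1 (fun h => absurd (hf h) (by decide))
  have hy1r : y1 ∈ Set.range f := by
    by_contra hy1r
    exact hy1 (hDcl _ _ hx1 hy1r hxy1)
  obtain ⟨p1, rfl⟩ := hy1r
  have hp1r : f p1 ∉ D := fun h => hDS _ h ⟨p1, rfl⟩
  obtain ⟨x2, y2, hx2, hy2, hy2c, hxy2⟩ :=
    step (f p1) hp1r 0 (fun h => hy1c (h.symm ▸ rfl))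
  have hy2r : y2 ∈ Set.range f := by
    by_contra hy2r
    exact hy2 (hDcl _ _ hx2 hy2r hxy2)
  obtain ⟨p2, rfl⟩ := hy2r
  exact ⟨x1, x2, p1, p2, hx1, hx2, hxy1, hxy2, fun h => hy2c (h ▸ rfl)⟩

lemma part1 (hf : Function.Injective f)
    (hadjP : ∀ (i : ℕ) (hi : i + 1 < 11), G.Adj (f ⟨i, Nat.lt_of_succ_lt hi⟩) (f ⟨i + 1, hi⟩))
    (hfree : ¬ ContainsSubdividedClaw G 1 3 6) (hlong : ¬ ContainsPathOn G 12)
    (hcut : ∀ v : V, (G.induce {u : V | u ≠ v}).Connected)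
    (a b c : ↥((Set.range f)ᶜ : Set V))
    (hrab : (G.induce ((Set.range f)ᶜ : Set V)).Reachable a b)
    (hrac : (G.induce ((Set.range f)ᶜ : Set V)).Reachable a c)
    (hne1 : a ≠ b) (hne2 : a ≠ c) (hne3 : b ≠ c) : False := by
  classical
  have haD : (a : V) ∈ (DD G f a) := ⟨a.prop, SimpleGraph.Reachable.refl _⟩
  have hDS : ∀ z ∈ (DD G f a), z ∉ Set.range f := fun z hz => hz.1
  have hDcl : ∀ x y, x ∈ (DD G f a) → y ∉ Set.range f → G.Adj x y → y ∈ (DD G f a) := by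
    rintro x y ⟨hxS, hrx⟩ hy hadj
    exact ⟨hy, hrx.trans (SimpleGraph.Adj.reachable (by simpa using hadj))⟩
  obtain ⟨x1, x2, p1, p2, hx1D, hx2D, hx1p, hx2p, hp12⟩ := two_attach hcut hf hDS hDcl haD
  have hsnbr : ∀ z, z ∈ (DD G f a) → ∃ t : V, t ∈ (ScS f) ∧ G.Adj z t := by
    rintro z ⟨hzS, hrz⟩
    by_cases hza : (⟨z, hzS⟩ : ↥(ScS f)) = a
    · obtain ⟨y, hy⟩ := firstStep hrab hne1
      refine ⟨↑y, y.prop, ?_⟩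
      have hzv : z = ↑a := congrArg Subtype.val hza
      rw [hzv]; exact hy
    · obtain ⟨y, hy⟩ := firstStep hrz.symm hza
      exact ⟨↑y, y.prop, hy⟩
  have key : ∀ w : V, w ∈ (DD G f a) → ∀ i : Fin 11, G.Adj w (f i) → i = 2 ∨ i = 5 ∨ i = 8 := by
    intro w hw i hwi
    obtain ⟨t, htS, hwt⟩ := hsnbr w hw
    exact attachPos hf hadjP hfree hlong (hDS w hw) htS hwt hwi
  have hq1 := key _ hx1D _ hx1p
  have hq2 := key _ hx2D _ hx2p
  have hdmain : ∃ dd : V, dd ∈ (DD G f a) ∧ (G.Adj dd (f 2) ∨ G.Adj dd (f 8)) := by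
    rcases hq1 with h | h | h
    · exact ⟨x1, hx1D, Or.inl (h ▸ hx1p)⟩
    · rcases hq2 with h' | h' | h'
      · exact ⟨x2, hx2D, Or.inl (h' ▸ hx2p)⟩
      · exact absurd (h.trans h'.symm) hp12
      · exact ⟨x2, hx2D, Or.inr (h' ▸ hx2p)⟩
    · exact ⟨x1, hx1D, Or.inr (h ▸ hx1p)⟩
  obtain ⟨d, hdD, hbase⟩ := hdmain
  obtain ⟨hdS, hdr⟩ := hdD
  have hdnr : d ∉ Set.range f := hdS
  have hstar : ∀ y : ↥(ScS f), (G.induce (ScS f)).Reachable ⟨d, hdS⟩ y → (y : V) = d ∨ G.Adj d ↑y := by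
    intro y hry
    by_cases h1 : (y : V) = d
    · exact Or.inl h1
    by_cases h2 : G.Adj d ↑y
    · exact Or.inr h2
    exfalso
    have hney : (⟨d, hdS⟩ : ↥(ScS f)) ≠ y := fun h => h1 (congrArg Subtype.val h).symm
    obtain ⟨x, yy, hux, hxy, hxu, hyu, hxyne, _⟩ := path_head2 hry hney h2
    have hd1 : d ≠ ↑x := fun h => hxu (Subtype.ext h.symm)
    have hd2 : d ≠ ↑yy := fun h => hyu (Subtype.ext h.symm)
    have hd3 : (x : V) ≠ ↑yy := fun h => hxyne (Subtype.ext h)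
    rcases hbase with hb2 | hb8
    · exact hlong (certC1 hf hadjP hdnr x.prop yy.prop hd1 hd2 hd3 hb2.symm hux hxy)
    · exact hlong (certC2 hf hadjP hdnr x.prop yy.prop hd1 hd2 hd3 hb8.symm hux hxy)
  have hrda : (G.induce (ScS f)).Reachable ⟨d, hdS⟩ a := hdr.symm
  suffices hfin : ∀ e e' : ↥(ScS f), e ≠ e' → (e : V) ≠ d → (e' : V) ≠ d →
      (G.induce (ScS f)).Reachable a e → (G.induce (ScS f)).Reachable a e' → False by
    by_cases hbd : (b : V) = d
    · refine hfin a c hne2 ?_ ?_ (SimpleGraph.Reachable.refl _) hrac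
      · exact fun h => hne1 (Subtype.ext (h.trans hbd.symm))
      · exact fun h => hne3 (Subtype.ext (hbd.trans h.symm))
    · by_cases hcd : (c : V) = d
      · refine hfin a b hne1 ?_ ?_ (SimpleGraph.Reachable.refl _) hrab
        · exact fun h => hne2 (Subtype.ext (h.trans hcd.symm))
        · exact hbd
      · exact hfin b c hne3 hbd hcd hrab hrac
  intro e e' hee hed hed' hrae hrae'
  have hde : G.Adj d ↑e := (hstar e (hrda.trans hrae)).resolve_left hed
  have hde' : G.Adj d ↑e' := (hstar e' (hrda.trans hrae')).resolve_left hed'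
  have hde_ne : d ≠ (e : V) := fun h => hed h.symm
  have hde'_ne : d ≠ (e' : V) := fun h => hed' h.symm
  have hee' : (e : V) ≠ ↑e' := fun h => hee (Subtype.ext h)
  have hf0d : f 0 ≠ d := fun h => hdnr ⟨0, h⟩
  obtain ⟨z, y, hz, hyD, hyd, hzy⟩ := cross (G := G) (hcut d) (D := {(e : V)}) hed hf0d rfl
    (fun h => e.prop ⟨0, h⟩)
  have hze : z = ↑e := hz
  have hey : G.Adj ↑e y := hze ▸ hzy
  have hyne : (e : V) ≠ y := fun h => hyD h.symm
  by_cases hyr : y ∈ Set.range f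
  · obtain ⟨q, rfl⟩ := hyr
    have hq : q = 2 ∨ q = 5 ∨ q = 8 :=
      attachPos hf hadjP hfree hlong e.prop hdS hde.symm hey
    rcases hq with rfl | rfl | rfl
    · exact hlong (certC1 hf hadjP e.prop hdnr e'.prop hed hee' hde'_ne hey.symm hde.symm hde')
    · rcases hbase with hb2 | hb8
      · exact hfree (certC3 hf hadjP hdnr e.prop e'.prop hde_ne hde'_ne hee' hde' hb2 hde hey)
      · exact hfree (certC4 hf hadjP hdnr e.prop e'.prop hde_ne hde'_ne hee' hde' hb8 hde hey)
    · exact hlong (certC2 hf hadjP e.prop hdnr e'.prop hed hee' hde'_ne hey.symm hde.symm hde')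
  · have hyS : y ∈ (ScS f) := hyr
    rcases hbase with hb2 | hb8
    · exact hlong (certC1 hf hadjP hdnr e.prop hyS hde_ne (fun h => hyd h.symm) hyne hb2.symm hde hey)
    · exact hlong (certC2 hf hadjP hdnr e.prop hyS hde_ne (fun h => hyd h.symm) hyne hb8.symm hde hey)

end Stmt15Aux

open Stmt15Aux in
/-- If `G` is 2-connected and `S_{1,3,6}`-subgraph-free with a longest path
`P = (v_1, …, v_11)` on exactly 11 vertices, then every component of `G − V(P)` has at
most 2 vertices, and each component of size exactly 2 is adjacent to exactly two
vertices of `P`, both among `{v_3, v_6, v_9}`. -/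
theorem stmt15 {V : Type*} (G : SimpleGraph V) (h2c : TwoConnected G)
    (hfree : ¬ ContainsSubdividedClaw G 1 3 6)
    (f : Fin 11 → V) (hP : IsPathEmb G 11 f) (hlong : ¬ ContainsPathOn G 12)
    (S : Set V) (hS : S = (Set.range f)ᶜ) :
    (∀ a b c : S, (G.induce S).Reachable a b → (G.induce S).Reachable a c →
      a = b ∨ a = c ∨ b = c) ∧
    (∀ a b : S, (G.induce S).Reachable a b → a ≠ b →
      ∃ u v : V, u ≠ v ∧ u ∈ ({f 2, f 5, f 8} : Set V) ∧ v ∈ ({f 2, f 5, f 8} : Set V) ∧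
        {w : V | w ∈ Set.range f ∧ (G.Adj (a : V) w ∨ G.Adj (b : V) w)} = {u, v}) := by
  classical
  obtain ⟨hcard, hconn, hcut⟩ := h2c
  obtain ⟨hf, hadjP⟩ := hP
  subst hS
  constructor
  · intro a b c hrab hrac
    by_contra hcon
    push_neg at hcon
    exact part1 hf hadjP hfree hlong hcut a b c hrab hrac hcon.1 hcon.2.1 hcon.2.2
  · intro a b hr hne
    have ha : (a : V) ∉ Set.range f := a.prop
    have hb : (b : V) ∉ Set.range f := b.prop
    have hvne : (a : V) ≠ (b : V) := fun h => hne (Subtype.ext h)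
    have hab : G.Adj ↑a ↑b := by
      by_contra hnadj
      obtain ⟨x, y, hux, hxy, hxu, hyu, hxy2, hxv⟩ := path_head2 hr hne hnadj
      exact part1 hf hadjP hfree hlong hcut a x b
        (SimpleGraph.Adj.reachable (by simpa using hux)) hr hxu.symm hne hxv
    have haD : (a : V) ∈ (DD G f a) := ⟨a.prop, SimpleGraph.Reachable.refl _⟩
    have hDS : ∀ z ∈ (DD G f a), z ∉ Set.range f := fun z hz => hz.1
    have hDcl : ∀ x y, x ∈ (DD G f a) → y ∉ Set.range f → G.Adj x y → y ∈ (DD G f a) := by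
      rintro x y ⟨hxS, hrx⟩ hy hadj
      exact ⟨hy, hrx.trans (SimpleGraph.Adj.reachable (by simpa using hadj))⟩
    have hDab : ∀ z, z ∈ (DD G f a) → z = ↑a ∨ z = ↑b := by
      rintro z ⟨hzS, hrz⟩
      by_cases hza : z = ↑a
      · exact Or.inl hza
      by_cases hzb : z = ↑b
      · exact Or.inr hzb
      exact absurd (part1 hf hadjP hfree hlong hcut a b ⟨z, hzS⟩ hr hrz hne
        (fun h => hza (congrArg Subtype.val h).symm)
        (fun h => hzb (congrArg Subtype.val h).symm)) id
    obtain ⟨x1, x2, p1, p2, hx1D, hx2D, hx1p, hx2p, hp12⟩ := two_attach hcut hf hDS hDcl haD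
    have hx1ab := hDab _ hx1D
    have hx2ab := hDab _ hx2D
    have hAtt1 : G.Adj ↑a (f p1) ∨ G.Adj ↑b (f p1) := by
      rcases hx1ab with h | h
      · exact Or.inl (h ▸ hx1p)
      · exact Or.inr (h ▸ hx1p)
    have hAtt2 : G.Adj ↑a (f p2) ∨ G.Adj ↑b (f p2) := by
      rcases hx2ab with h | h
      · exact Or.inl (h ▸ hx2p)
      · exact Or.inr (h ▸ hx2p)
    have hq1 : p1 = 2 ∨ p1 = 5 ∨ p1 = 8 := by
      rcases hAtt1 with h | h
      · exact attachPos hf hadjP hfree hlong ha hb hab h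
      · exact attachPos hf hadjP hfree hlong hb ha hab.symm h
    have hq2 : p2 = 2 ∨ p2 = 5 ∨ p2 = 8 := by
      rcases hAtt2 with h | h
      · exact attachPos hf hadjP hfree hlong ha hb hab h
      · exact attachPos hf hadjP hfree hlong hb ha hab.symm h
    have hnall : ¬ ((G.Adj ↑a (f 2) ∨ G.Adj ↑b (f 2)) ∧ (G.Adj ↑a (f 5) ∨ G.Adj ↑b (f 5)) ∧
        (G.Adj ↑a (f 8) ∨ G.Adj ↑b (f 8))) := fun h =>
      noThree hf hadjP hfree ha hb hvne hab h.1 h.2.1 h.2.2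
    refine ⟨f p1, f p2, fun h => hp12 (hf h), ?_, ?_, ?_⟩
    · rcases hq1 with rfl | rfl | rfl <;> simp
    · rcases hq2 with rfl | rfl | rfl <;> simp
    · ext w
      simp only [Set.mem_setOf_eq, Set.mem_insert_iff, Set.mem_singleton_iff]
      constructor
      · rintro ⟨⟨i, rfl⟩, hwa⟩
        have hqi : i = 2 ∨ i = 5 ∨ i = 8 := by
          rcases hwa with h | h
          · exact attachPos hf hadjP hfree hlong ha hb hab h
          · exact attachPos hf hadjP hfree hlong hb ha hab.symm h
        by_cases hip1 : i = p1
        · exact Or.inl (by rw [hip1])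
        by_cases hip2 : i = p2
        · exact Or.inr (by rw [hip2])
        exfalso
        apply hnall
        rcases hqi with rfl | rfl | rfl <;> rcases hq1 with rfl | rfl | rfl <;>
            rcases hq2 with rfl | rfl | rfl <;>
          first
            | exact absurd rfl hip1
            | exact absurd rfl hip2
            | exact absurd rfl hp12
            | exact ⟨by assumption, by assumption, by assumption⟩
      · rintro (rfl | rfl)
        · exact ⟨⟨p1, rfl⟩, hAtt1⟩
        · exact ⟨⟨p2, rfl⟩, hAtt2⟩
end

section
/- Let b ≥ a ≥ 2 and let G be a 2-connected graph containing no subgraph isomorphic to S_{2,a,b}. Let P = (v_1, ..., v_r) be a longest path in G with r ≥ 3(a+b) such that V(P) is a vertex cover of G. Then there is no jump (a path whose internal vertices avoid P and whose edges are not edges of P) between two vertices v_i, v_j with a+1 ≤ i < j ≤ r−a and j − i ≥ 3. -/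
/-- A jump with respect to the path `f : Fin r → V`: a path from `u` to `v` of length
at least 1, internally vertex-disjoint from the path and edge-disjoint from it. -/
def IsJump {V : Type*} (G : SimpleGraph V) {r : ℕ} (f : Fin r → V) (u v : V) : Prop :=
  ∃ (m : ℕ) (q : Fin (m + 2) → V),
    Function.Injective q ∧ q 0 = u ∧ q (Fin.last (m + 1)) = v ∧
    (∀ (t : ℕ) (ht : t + 1 < m + 2),
      G.Adj (q ⟨t, Nat.lt_of_succ_lt ht⟩) (q ⟨t + 1, ht⟩)) ∧
    (∀ t : Fin (m + 2), t ≠ 0 → t ≠ Fin.last (m + 1) → q t ∉ Set.range f) ∧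
    (∀ (t : ℕ) (ht : t + 1 < m + 2), ¬ ∃ (i : ℕ) (hi : i + 1 < r),
      s(q ⟨t, Nat.lt_of_succ_lt ht⟩, q ⟨t + 1, ht⟩) =
        s(f ⟨i, Nat.lt_of_succ_lt hi⟩, f ⟨i + 1, hi⟩))

private def pv {V : Type*} {r : ℕ} (f : Fin r → V) (hr : 0 < r) (k : ℕ) : V :=
  f ⟨k % r, Nat.mod_lt k hr⟩

private lemma pv_eq {V : Type*} {r : ℕ} (f : Fin r → V) (hr : 0 < r) {k : ℕ} (hk : k < r) :
    pv f hr k = f ⟨k, hk⟩ := by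
  simp only [pv]
  congr 1
  exact Fin.ext (Nat.mod_eq_of_lt hk)

private lemma pv_inj {V : Type*} {r : ℕ} {f : Fin r → V} (hr : 0 < r)
    (hf : Function.Injective f) {k l : ℕ} (hk : k < r) (hl : l < r)
    (h : pv f hr k = pv f hr l) : k = l := by
  rw [pv_eq f hr hk, pv_eq f hr hl] at h
  exact congrArg Fin.val (hf h)

private lemma pv_adj {V : Type*} {G : SimpleGraph V} {r : ℕ} {f : Fin r → V} (hr : 0 < r)
    (hadj : ∀ (t : ℕ) (ht : t + 1 < r), G.Adj (f ⟨t, Nat.lt_of_succ_lt ht⟩) (f ⟨t + 1, ht⟩))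
    {k : ℕ} (hk : k + 1 < r) : G.Adj (pv f hr k) (pv f hr (k + 1)) := by
  rw [pv_eq f hr (Nat.lt_of_succ_lt hk), pv_eq f hr hk]
  exact hadj k hk

private lemma claw_of {V : Type*} (G : SimpleGraph V) (a b : ℕ)
    (F Gg Hh : ℕ → V)
    (h1 : F 0 = Gg 0) (h2 : Gg 0 = Hh 0)
    (Fadj : ∀ t, t + 1 ≤ 2 → G.Adj (F t) (F (t + 1)))
    (Gadj : ∀ t, t + 1 ≤ a → G.Adj (Gg t) (Gg (t + 1)))
    (Hadj : ∀ t, t + 1 ≤ b → G.Adj (Hh t) (Hh (t + 1)))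
    (Finj : ∀ s t, s ≤ 2 → t ≤ 2 → F s = F t → s = t)
    (Ginj : ∀ s t, s ≤ a → t ≤ a → Gg s = Gg t → s = t)
    (Hinj : ∀ s t, s ≤ b → t ≤ b → Hh s = Hh t → s = t)
    (FG : ∀ s t, s ≤ 2 → t ≤ a → F s = Gg t → s = 0 ∧ t = 0)
    (FH : ∀ s t, s ≤ 2 → t ≤ b → F s = Hh t → s = 0 ∧ t = 0)
    (GH : ∀ s t, s ≤ a → t ≤ b → Gg s = Hh t → s = 0 ∧ t = 0) :
    ContainsSubdividedClaw G 2 a b := by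
  refine ⟨fun t => F t.1, fun t => Gg t.1, fun t => Hh t.1, ?_, ?_,
    ⟨fun s t h => Fin.ext (Finj s.1 t.1 (Nat.lt_succ_iff.mp s.2) (Nat.lt_succ_iff.mp t.2) h),
     fun t ht => Fadj t (Nat.lt_succ_iff.mp ht)⟩,
    ⟨fun s t h => Fin.ext (Ginj s.1 t.1 (Nat.lt_succ_iff.mp s.2) (Nat.lt_succ_iff.mp t.2) h),
     fun t ht => Gadj t (Nat.lt_succ_iff.mp ht)⟩,
    ⟨fun s t h => Fin.ext (Hinj s.1 t.1 (Nat.lt_succ_iff.mp s.2) (Nat.lt_succ_iff.mp t.2) h),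
     fun t ht => Hadj t (Nat.lt_succ_iff.mp ht)⟩,
    ?_, ?_, ?_⟩
  · simpa using h1
  · simpa using h2
  · intro s t h
    obtain ⟨hs, ht⟩ := FG s.1 t.1 (Nat.lt_succ_iff.mp s.2) (Nat.lt_succ_iff.mp t.2) h
    exact ⟨Fin.ext (by simp [hs]), Fin.ext (by simp [ht])⟩
  · intro s t h
    obtain ⟨hs, ht⟩ := FH s.1 t.1 (Nat.lt_succ_iff.mp s.2) (Nat.lt_succ_iff.mp t.2) h
    exact ⟨Fin.ext (by simp [hs]), Fin.ext (by simp [ht])⟩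
  · intro s t h
    obtain ⟨hs, ht⟩ := GH s.1 t.1 (Nat.lt_succ_iff.mp s.2) (Nat.lt_succ_iff.mp t.2) h
    exact ⟨Fin.ext (by simp [hs]), Fin.ext (by simp [ht])⟩

/-- For `b ≥ a ≥ 2`, in a 2-connected `S_{2,a,b}`-subgraph-free graph with a longest
path `P = (v_1, …, v_r)`, `r ≥ 3(a+b)`, whose vertex set is a vertex cover, there is no
jump between two vertices `v_i, v_j` with `a+1 ≤ i < j ≤ r−a` and `j − i ≥ 3`
(stated here with 0-indexed positions). -/
theorem stmt16 {V : Type*} (G : SimpleGraph V) (a b : ℕ) (ha : 2 ≤ a) (hab : a ≤ b)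
    (h2c : TwoConnected G) (hfree : ¬ ContainsSubdividedClaw G 2 a b)
    (r : ℕ) (hr : 3 * (a + b) ≤ r) (f : Fin r → V) (hP : IsPathEmb G r f)
    (hlong : ¬ ContainsPathOn G (r + 1))
    (hvc : ∀ u v : V, G.Adj u v → u ∈ Set.range f ∨ v ∈ Set.range f)
    (i j : Fin r) (hi : a ≤ (i : ℕ)) (hij : (i : ℕ) + 3 ≤ (j : ℕ))
    (hj : (j : ℕ) + a + 1 ≤ r) :
    ¬ IsJump G f (f i) (f j) := by
  obtain ⟨I, hIr⟩ := i
  obtain ⟨J, hJr⟩ := j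
  have hi' : a ≤ I := hi
  have hij' : I + 3 ≤ J := hij
  have hj' : J + a + 1 ≤ r := hj
  rintro ⟨m, qq, qinj, q0, qlast, qadj, qoff, -⟩
  obtain ⟨finj, fadj⟩ := hP
  have hr0 : 0 < r := by omega
  have hm2 : 0 < m + 2 := Nat.succ_pos _
  have PvI : pv f hr0 I = f ⟨I, hIr⟩ := pv_eq f hr0 hIr
  have PvJ : pv f hr0 J = f ⟨J, hJr⟩ := pv_eq f hr0 hJr
  have Pinj : ∀ k l, k < r → l < r → pv f hr0 k = pv f hr0 l → k = l :=
    fun k l hk hl h => pv_inj hr0 finj hk hl h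
  have Padj : ∀ k, k + 1 < r → G.Adj (pv f hr0 k) (pv f hr0 (k + 1)) :=
    fun k hk => pv_adj hr0 fadj hk
  have Qinj : ∀ k l, k < m + 2 → l < m + 2 → pv qq hm2 k = pv qq hm2 l → k = l :=
    fun k l hk hl h => pv_inj hm2 qinj hk hl h
  have Qadj : ∀ k, k + 1 < m + 2 → G.Adj (pv qq hm2 k) (pv qq hm2 (k + 1)) :=
    fun k hk => pv_adj hm2 qadj hk
  have hQ0 : pv qq hm2 0 = pv f hr0 I := by
    rw [pv_eq qq hm2 hm2, PvI, ← q0]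
    exact congrArg qq (Fin.ext (by simp))
  have hQlast : pv qq hm2 (m + 1) = pv f hr0 J := by
    rw [pv_eq qq hm2 (Nat.lt_succ_self _), PvJ, ← qlast]
    exact congrArg qq (Fin.ext (by simp))
  have Qoff : ∀ t, 1 ≤ t → t ≤ m → pv qq hm2 t ∉ Set.range f := by
    intro t h1 h2
    rw [pv_eq qq hm2 (by omega)]
    refine qoff ⟨t, by omega⟩ ?_ ?_
    · intro h
      have := congrArg Fin.val h
      simp only [Fin.val_zero] at this
      omega
    · intro h
      have := congrArg Fin.val h
      simp only [Fin.val_last] at this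
      omega
  -- the forward route: along the jump, then along P past v_J
  set R : ℕ → V := fun t => if t ≤ m + 1 then pv qq hm2 t else pv f hr0 (J + (t - (m + 1)))
    with hRdef
  have hRlowdef : ∀ t, t ≤ m + 1 → R t = pv qq hm2 t := by
    intro t ht; rw [hRdef]; simp only [if_pos ht]
  have hRhigh : ∀ t, m + 1 ≤ t → R t = pv f hr0 (J + (t - (m + 1))) := by
    intro t ht
    rcases Nat.eq_or_lt_of_le ht with h | h
    · rw [← h, hRlowdef (m + 1) le_rfl]
      simpa using hQlast
    · rw [hRdef]; simp only [if_neg (by omega : ¬ t ≤ m + 1)]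
  have hR0 : R 0 = pv f hr0 I := by
    rw [hRlowdef 0 (by omega)]; exact hQ0
  have hRadj : ∀ t, J + t + 1 ≤ r + m → G.Adj (R t) (R (t + 1)) := by
    intro t ht
    by_cases h : t + 1 ≤ m + 1
    · rw [hRlowdef t (by omega), hRlowdef (t + 1) h]
      exact Qadj t (by omega)
    · rw [hRhigh t (by omega), hRhigh (t + 1) (by omega)]
      have e : J + (t + 1 - (m + 1)) = (J + (t - (m + 1))) + 1 := by omega
      rw [e]
      exact Padj _ (by omega)
  have hRkey : ∀ s t, J + t ≤ r + m → s ≤ m + 1 → m + 1 < t → R s = R t → False := by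
    intro s t ht hs hlt h
    rw [hRlowdef s hs, hRhigh t (by omega)] at h
    have hkr : J + (t - (m + 1)) < r := by omega
    rcases Nat.eq_zero_or_pos s with rfl | hs1
    · rw [hQ0] at h
      have := Pinj _ _ hIr hkr h
      omega
    · rcases Nat.eq_or_lt_of_le hs with h2 | h2
      · rw [h2, hQlast] at h
        have := Pinj _ _ hJr hkr h
        omega
      · exact Qoff s hs1 (by omega) (by rw [h]; exact ⟨_, rfl⟩)
  have hRinj : ∀ s t, J + s ≤ r + m → J + t ≤ r + m → R s = R t → s = t := by
    intro s t hs ht h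
    by_cases h1 : s ≤ m + 1 <;> by_cases h2 : t ≤ m + 1
    · rw [hRlowdef s h1, hRlowdef t h2] at h
      exact Qinj s t (by omega) (by omega) h
    · exact (hRkey s t ht h1 (by omega) h).elim
    · exact (hRkey t s hs h2 (by omega) h.symm).elim
    · rw [hRhigh s (by omega), hRhigh t (by omega)] at h
      have := Pinj _ _ (by omega) (by omega) h
      omega
  have hRlow : ∀ t k, 1 ≤ t → J + t ≤ r + m → k < J → R t ≠ pv f hr0 k := by
    intro t k h1 ht hk h
    by_cases h2 : t ≤ m
    · rw [hRlowdef t (by omega)] at h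
      exact Qoff t h1 h2 (by rw [h]; exact ⟨_, rfl⟩)
    · rw [hRhigh t (by omega)] at h
      have := Pinj _ _ (by omega) (by omega) h
      omega
  -- the reversed route: along the jump backwards, then along P before v_I
  set R' : ℕ → V := fun t => if t ≤ m + 1 then pv qq hm2 (m + 1 - t)
      else pv f hr0 (I - (t - (m + 1))) with hR'def
  have hR'low : ∀ t, t ≤ m + 1 → R' t = pv qq hm2 (m + 1 - t) := by
    intro t ht; rw [hR'def]; simp only [if_pos ht]
  have hR'high : ∀ t, m + 1 ≤ t → R' t = pv f hr0 (I - (t - (m + 1))) := by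
    intro t ht
    rcases Nat.eq_or_lt_of_le ht with h | h
    · rw [← h, hR'low (m + 1) le_rfl]
      simpa using hQ0
    · rw [hR'def]; simp only [if_neg (by omega : ¬ t ≤ m + 1)]
  have hR'0 : R' 0 = pv f hr0 J := by
    rw [hR'low 0 (by omega)]
    simpa using hQlast
  have hR'adj : ∀ t, t + 1 ≤ m + 1 + I → G.Adj (R' t) (R' (t + 1)) := by
    intro t ht
    by_cases h : t + 1 ≤ m + 1
    · rw [hR'low t (by omega), hR'low (t + 1) h]
      have e1 : m + 1 - t = (m + 1 - (t + 1)) + 1 := by omega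
      rw [e1]
      exact (Qadj (m + 1 - (t + 1)) (by omega)).symm
    · rw [hR'high t (by omega), hR'high (t + 1) (by omega)]
      have e : I - (t - (m + 1)) = (I - (t + 1 - (m + 1))) + 1 := by omega
      rw [e]
      exact (Padj (I - (t + 1 - (m + 1))) (by omega)).symm
  have hR'key : ∀ s t, s ≤ m + 1 → m + 1 < t → t ≤ m + 1 + I → R' s = R' t → False := by
    intro s t hs hlt ht h
    rw [hR'low s hs, hR'high t (by omega)] at h
    have hkr : I - (t - (m + 1)) < r := by omega
    rcases Nat.eq_zero_or_pos s with rfl | hs1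
    · simp only [Nat.sub_zero] at h
      rw [hQlast] at h
      have := Pinj _ _ hJr hkr h
      omega
    · rcases Nat.eq_or_lt_of_le hs with h2 | h2
      · rw [h2] at h
        simp only [Nat.sub_self] at h
        rw [hQ0] at h
        have := Pinj _ _ hIr hkr h
        omega
      · exact Qoff (m + 1 - s) (by omega) (by omega) (by rw [h]; exact ⟨_, rfl⟩)
  have hR'inj : ∀ s t, s ≤ m + 1 + I → t ≤ m + 1 + I → R' s = R' t → s = t := by
    intro s t hs ht h
    by_cases h1 : s ≤ m + 1 <;> by_cases h2 : t ≤ m + 1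
    · rw [hR'low s h1, hR'low t h2] at h
      have := Qinj _ _ (by omega) (by omega) h
      omega
    · exact (hR'key s t h1 (by omega) ht h).elim
    · exact (hR'key t s h2 (by omega) hs h.symm).elim
    · rw [hR'high s (by omega), hR'high t (by omega)] at h
      have := Pinj _ _ (by omega) (by omega) h
      omega
  have hR'hi : ∀ t k, 1 ≤ t → t ≤ m + 1 + I → I < k → k < r → R' t ≠ pv f hr0 k := by
    intro t k h1 ht hIk hkr h
    by_cases h2 : t ≤ m
    · rw [hR'low t (by omega)] at h
      exact Qoff (m + 1 - t) (by omega) (by omega) (by rw [h]; exact ⟨_, rfl⟩)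
    · rw [hR'high t (by omega)] at h
      have := Pinj _ _ (by omega) hkr h
      omega
  apply hfree
  by_cases hc1 : I + b + 1 ≤ J
  · -- Case A: center v_I, 2-arm along the route, a-arm backwards, b-arm forwards
    refine claw_of G a b R (fun t => pv f hr0 (I - t)) (fun t => pv f hr0 (I + t))
      ?_ ?_ ?_ ?_ ?_ ?_ ?_ ?_ ?_ ?_ ?_
    · simpa using hR0
    · simp
    · intro t ht; exact hRadj t (by omega)
    · intro t ht
      show G.Adj (pv f hr0 (I - t)) (pv f hr0 (I - (t + 1)))
      have e : I - t = (I - (t + 1)) + 1 := by omega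
      rw [e]
      exact (Padj _ (by omega)).symm
    · intro t ht; exact Padj (I + t) (by omega)
    · intro s t hs ht h; exact hRinj s t (by omega) (by omega) h
    · intro s t hs ht h; have := Pinj _ _ (by omega) (by omega) h; omega
    · intro s t hs ht h; have := Pinj _ _ (by omega) (by omega) h; omega
    · intro s t hs ht h
      rcases Nat.eq_zero_or_pos s with rfl | hs1
      · rw [hR0] at h
        have := Pinj _ _ hIr (by omega) h
        exact ⟨rfl, by omega⟩
      · exact absurd h (hRlow s (I - t) hs1 (by omega) (by omega))
    · intro s t hs ht h
      rcases Nat.eq_zero_or_pos s with rfl | hs1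
      · rw [hR0] at h
        have := Pinj _ _ hIr (by omega) h
        exact ⟨rfl, by omega⟩
      · exact absurd h (hRlow s (I + t) hs1 (by omega) (by omega))
    · intro s t hs ht h
      have := Pinj _ _ (by omega) (by omega) h
      constructor <;> omega
  · by_cases hc2 : J + b + 1 ≤ r
    · -- Case B: center v_I, 2-arm forwards, a-arm backwards, b-arm along the route
      refine claw_of G a b (fun t => pv f hr0 (I + t)) (fun t => pv f hr0 (I - t)) R
        ?_ ?_ ?_ ?_ ?_ ?_ ?_ ?_ ?_ ?_ ?_
      · simp
      · simpa using hR0.symm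
      · intro t ht; exact Padj (I + t) (by omega)
      · intro t ht
        show G.Adj (pv f hr0 (I - t)) (pv f hr0 (I - (t + 1)))
        have e : I - t = (I - (t + 1)) + 1 := by omega
        rw [e]
        exact (Padj _ (by omega)).symm
      · intro t ht; exact hRadj t (by omega)
      · intro s t hs ht h; have := Pinj _ _ (by omega) (by omega) h; omega
      · intro s t hs ht h; have := Pinj _ _ (by omega) (by omega) h; omega
      · intro s t hs ht h; exact hRinj s t (by omega) (by omega) h
      · intro s t hs ht h
        have := Pinj _ _ (by omega) (by omega) h
        constructor <;> omega
      · intro s t hs ht h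
        rcases Nat.eq_zero_or_pos t with rfl | ht1
        · rw [hR0] at h
          have := Pinj _ _ (by omega) hIr h
          exact ⟨by omega, rfl⟩
        · exact absurd h.symm (hRlow t (I + s) ht1 (by omega) (by omega))
      · intro s t hs ht h
        rcases Nat.eq_zero_or_pos t with rfl | ht1
        · rw [hR0] at h
          have := Pinj _ _ (by omega) hIr h
          exact ⟨by omega, rfl⟩
        · exact absurd h.symm (hRlow t (I - s) ht1 (by omega) (by omega))
    · -- Case C: center v_J, 2-arm backwards, a-arm forwards, b-arm along the reversed route
      have hbI : b ≤ I := by omega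
      refine claw_of G a b (fun t => pv f hr0 (J - t)) (fun t => pv f hr0 (J + t)) R'
        ?_ ?_ ?_ ?_ ?_ ?_ ?_ ?_ ?_ ?_ ?_
      · simp
      · simpa using hR'0.symm
      · intro t ht
        show G.Adj (pv f hr0 (J - t)) (pv f hr0 (J - (t + 1)))
        have e : J - t = (J - (t + 1)) + 1 := by omega
        rw [e]
        exact (Padj _ (by omega)).symm
      · intro t ht; exact Padj (J + t) (by omega)
      · intro t ht; exact hR'adj t (by omega)
      · intro s t hs ht h; have := Pinj _ _ (by omega) (by omega) h; omega
      · intro s t hs ht h; have := Pinj _ _ (by omega) (by omega) h; omega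
      · intro s t hs ht h; exact hR'inj s t (by omega) (by omega) h
      · intro s t hs ht h
        have := Pinj _ _ (by omega) (by omega) h
        constructor <;> omega
      · intro s t hs ht h
        rcases Nat.eq_zero_or_pos t with rfl | ht1
        · rw [hR'0] at h
          have := Pinj _ _ (by omega) hJr h
          exact ⟨by omega, rfl⟩
        · exact absurd h.symm (hR'hi t (J - s) ht1 (by omega) (by omega) (by omega))
      · intro s t hs ht h
        rcases Nat.eq_zero_or_pos t with rfl | ht1
        · rw [hR'0] at h
          have := Pinj _ _ (by omega) hJr h
          exact ⟨by omega, rfl⟩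
        · exact absurd h.symm (hR'hi t (J + s) ht1 (by omega) (by omega) (by omega))
end

section
/- Let b ≥ a ≥ 3 and let G be a graph containing a path P = (p_1, ..., p_ℓ) with ℓ ≥ 3b. If there exist indices i, j with a+1 ≤ i, j ≤ ℓ−a, j ≥ i+4, and a path Q in G between p_i and p_j whose only vertices on P are its endpoints p_i and p_j, then G contains a subgraph isomorphic to S_{3,a,b}. -/
/-!
If `b ≤ i`, centre the claw at `p i`: its 3-arm runs along `P` towards `p j`, its `b`-arm runs
backwards along `P`, and its `a`-arm follows `Q` to `p j` and then continues along `P`. Reversing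
`P` and `Q` gives the same construction centred at `p j` when `j + b < ℓ`, and also when
`i + b < j`, now with the 3-arm pointing away from `p i` and the `b`-arm towards it. If none of
these holds, then `ℓ ≤ j + b ≤ i + 2b < 3b`.
-/

section

variable {V : Type*} {G : SimpleGraph V}

/-- `F 0, F 1, …, F n` are the vertices of a path with `n` edges. -/
structure IsPathSeq (G : SimpleGraph V) (n : ℕ) (F : ℕ → V) : Prop where
  inj : ∀ s ≤ n, ∀ t ≤ n, F s = F t → s = t
  adj : ∀ t < n, G.Adj (F t) (F (t + 1))

/-- The walk `F 0, …, F m` followed by `H 1, H 2, …`. -/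
def seqAppend (m : ℕ) (F H : ℕ → V) (t : ℕ) : V :=
  if t ≤ m then F t else H (t - m)

namespace IsPathSeq

variable {m n k x y : ℕ} {F H : ℕ → V}

theorem mono (h : IsPathSeq G n F) (hmn : m ≤ n) : IsPathSeq G m F where
  inj s hs t ht := h.inj s (hs.trans hmn) t (ht.trans hmn)
  adj t ht := h.adj t (ht.trans_le hmn)

theorem shift (h : IsPathSeq G n F) (hk : k + y ≤ n) : IsPathSeq G y fun t => F (k + t) where
  inj s hs t ht hst := by
    have := h.inj _ (by omega) _ (by omega) hst
    omega
  adj t ht := h.adj (k + t) (by omega)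

theorem reflect (h : IsPathSeq G n F) (hx : x ≤ k) (hk : k ≤ n) :
    IsPathSeq G x fun t => F (k - t) where
  inj s hs t ht hst := by
    have := h.inj _ (by omega) _ (by omega) hst
    omega
  adj t ht := by
    have := h.adj (k - (t + 1)) (by omega)
    rw [show k - (t + 1) + 1 = k - t by omega] at this
    exact this.symm

theorem isPathEmb (h : IsPathSeq G n F) : IsPathEmb G (n + 1) fun t => F t :=
  ⟨fun s t hst => Fin.ext (h.inj s s.is_le t t.is_le hst), fun t ht => h.adj t (by omega)⟩

theorem append (hF : IsPathSeq G m F) (hH : IsPathSeq G n H)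
    (hjoin : F m = H 0) (hdisj : ∀ s ≤ m, ∀ t ≤ n, F s = H t → t = 0) :
    IsPathSeq G (m + n) (seqAppend m F H) where
  inj s hs t ht hst := by
    unfold seqAppend at hst
    split_ifs at hst with hsm htm htm
    · exact hF.inj s hsm t htm hst
    · exact absurd (hdisj s hsm (t - m) (by omega) hst) (by omega)
    · exact absurd (hdisj t htm (s - m) (by omega) hst.symm) (by omega)
    · have := hH.inj _ (by omega) _ (by omega) hst
      omega
  adj t ht := by
    unfold seqAppend
    by_cases htm : t + 1 ≤ m
    · rw [if_pos (by omega), if_pos htm]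
      exact hF.adj t htm
    rw [if_neg htm, show t + 1 - m = t - m + 1 by omega]
    split_ifs with htm'
    · obtain rfl : t = m := by omega
      simpa [hjoin] using hH.adj 0 (by omega)
    · exact hH.adj (t - m) (by omega)

end IsPathSeq

open Fin.NatCast in
theorem IsPathEmb.isPathSeq {n : ℕ} {p : Fin (n + 1) → V} (hp : IsPathEmb G (n + 1) p) :
    IsPathSeq G n fun t => p (t : Fin (n + 1)) where
  inj s hs t ht hst := by
    simpa [Fin.ext_iff, Nat.mod_eq_of_lt (Nat.lt_succ_of_le hs),
      Nat.mod_eq_of_lt (Nat.lt_succ_of_le ht)] using hp.1 hst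
  adj t ht := by
    rw [Fin.natCast_eq_mk (by omega : t < n + 1), Fin.natCast_eq_mk (by omega : t + 1 < n + 1)]
    exact hp.2 t (by omega)

structure IsBridge (G : SimpleGraph V) (n : ℕ) (P : ℕ → V) (r : ℕ) (Q : ℕ → V) (k e : ℕ) :
    Prop where
  isPathSeq : IsPathSeq G r Q
  start_le : k ≤ n
  finish_le : e ≤ n
  start : Q 0 = P k
  finish : Q r = P e
  avoids : ∀ t, 0 < t → t < r → ∀ s ≤ n, Q t ≠ P s

namespace IsBridge

variable {n r k e : ℕ} {P Q : ℕ → V}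

theorem reverse (hB : IsBridge G n P r Q k e) :
    IsBridge G n (fun t => P (n - t)) r (fun t => Q (r - t)) (n - e) (n - k) where
  isPathSeq := hB.isPathSeq.reflect le_rfl le_rfl
  start_le := Nat.sub_le n e
  finish_le := Nat.sub_le n k
  start := by simp [hB.finish, Nat.sub_sub_self hB.finish_le]
  finish := by simp [hB.start, Nat.sub_sub_self hB.start_le]
  avoids t ht0 htr s hs := hB.avoids (r - t) (by omega) (by omega) (n - s) (by omega)

theorem eq_ends_of_eq (hP : IsPathSeq G n P) (hB : IsBridge G n P r Q k e) {t s : ℕ} (ht : t ≤ r)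
    (hs : s ≤ n) (h : Q t = P s) : (t = 0 ∧ s = k) ∨ (t = r ∧ s = e) := by
  by_cases ht0 : t = 0
  · subst ht0
    exact .inl ⟨rfl, hP.inj s hs k hB.start_le (h.symm.trans hB.start)⟩
  by_cases htr : t = r
  · subst htr
    exact .inr ⟨rfl, hP.inj s hs e hB.finish_le (h.symm.trans hB.finish)⟩
  exact absurd h (hB.avoids t (by omega) (by omega) s hs)

theorem isPathSeq_append (hP : IsPathSeq G n P) (hB : IsBridge G n P r Q k e) (hke : k < e) :
    IsPathSeq G (r + (n - e)) (seqAppend r Q fun t => P (e + t)) :=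
  hB.isPathSeq.append (hP.shift (by have := hB.finish_le; omega)) (by simp [hB.finish])
    fun s hs t ht h => by
      rcases hB.eq_ends_of_eq hP hs (by have := hB.finish_le; omega) h with ⟨-, h'⟩ | ⟨-, h'⟩ <;>
        omega

theorem index_of_seqAppend_eq (hP : IsPathSeq G n P) (hB : IsBridge G n P r Q k e) {t s : ℕ}
    (ht : t ≤ r + (n - e)) (hs : s ≤ n) (h : seqAppend r Q (fun t => P (e + t)) t = P s) :
    (t = 0 ∧ s = k) ∨ (r ≤ t ∧ s = e + (t - r)) := by
  unfold seqAppend at h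
  split_ifs at h with htr
  · rcases hB.eq_ends_of_eq hP htr hs h with h' | h'
    · exact .inl h'
    · exact .inr (by omega)
  · have := hP.inj _ (by have := hB.finish_le; omega) _ hs h
    exact .inr (by omega)

end IsBridge

theorem ContainsSubdividedClaw.symm {a b c : ℕ} (h : ContainsSubdividedClaw G a b c) :
    ContainsSubdividedClaw G c b a := by
  obtain ⟨f, g, h, hfg, hgh, hf, hg, hh, dfg, dfh, dgh⟩ := h
  exact ⟨h, g, f, hgh.symm, hfg.symm, hh, hg, hf, fun s t hst => (dgh t s hst.symm).symm,
    fun s t hst => (dfh t s hst.symm).symm, fun s t hst => (dfg t s hst.symm).symm⟩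

theorem containsSubdividedClaw_of_isPathSeq {a b c : ℕ} {F₁ F₂ F₃ : ℕ → V}
    (h₁ : IsPathSeq G a F₁) (h₂ : IsPathSeq G b F₂) (h₃ : IsPathSeq G c F₃)
    (h₁₂ : F₁ 0 = F₂ 0) (h₂₃ : F₂ 0 = F₃ 0)
    (d₁₂ : ∀ s ≤ a, ∀ t ≤ b, F₁ s = F₂ t → s = 0 ∧ t = 0)
    (d₁₃ : ∀ s ≤ a, ∀ t ≤ c, F₁ s = F₃ t → s = 0 ∧ t = 0)
    (d₂₃ : ∀ s ≤ b, ∀ t ≤ c, F₂ s = F₃ t → s = 0 ∧ t = 0) :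
    ContainsSubdividedClaw G a b c := by
  have of_val {u v : ℕ} {s : Fin (u + 1)} {t : Fin (v + 1)} (h : (s : ℕ) = 0 ∧ (t : ℕ) = 0) :
      s = 0 ∧ t = 0 :=
    ⟨Fin.val_eq_zero_iff.1 h.1, Fin.val_eq_zero_iff.1 h.2⟩
  exact ⟨fun t => F₁ t, fun t => F₂ t, fun t => F₃ t, h₁₂, h₂₃, h₁.isPathEmb, h₂.isPathEmb,
    h₃.isPathEmb, fun s t hst => of_val (d₁₂ s s.is_le t t.is_le hst),
    fun s t hst => of_val (d₁₃ s s.is_le t t.is_le hst),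
    fun s t hst => of_val (d₂₃ s s.is_le t t.is_le hst)⟩

/-- Centre `P k`; the `y`-arm runs forward along `P`, the `a`-arm through `Q` and on along `P`
past `P e`, the `x`-arm backward along `P`. -/
theorem containsSubdividedClaw_of_isBridge {n r k e x y a : ℕ} {P Q : ℕ → V}
    (hP : IsPathSeq G n P) (hB : IsBridge G n P r Q k e)
    (hx : x ≤ k) (hy : k + y < e) (ha : a ≤ r + (n - e)) :
    ContainsSubdividedClaw G y a x := by
  have hen := hB.finish_le
  refine containsSubdividedClaw_of_isPathSeq (hP.shift (k := k) (by omega))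
    ((hB.isPathSeq_append hP (by omega)).mono ha) (hP.reflect hx hB.start_le) ?_ ?_ ?_ ?_ ?_
  · simp [seqAppend, hB.start]
  · simp [seqAppend, hB.start]
  · intro s hs t ht hst
    rcases hB.index_of_seqAppend_eq hP (by omega) (by omega) hst.symm with h | h <;> omega
  · intro s hs t ht hst
    have := hP.inj _ (by omega) _ (by omega) hst
    omega
  · intro s hs t ht hst
    rcases hB.index_of_seqAppend_eq hP (by omega) (by omega) hst with h | h <;> omega

open Fin.NatCast in
theorem isBridge_natCast {n r : ℕ} {p : Fin (n + 1) → V} {q : Fin (r + 1) → V}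
    {i j : Fin (n + 1)} (hq : IsPathEmb G (r + 1) q) (hq0 : q 0 = p i)
    (hqr : q (Fin.last r) = p j)
    (hqp : ∀ t : Fin (r + 1), t ≠ 0 → t ≠ Fin.last r → q t ∉ Set.range p) :
    IsBridge G n (fun t => p (t : Fin (n + 1))) r (fun t => q (t : Fin (r + 1))) i j where
  isPathSeq := hq.isPathSeq
  start_le := i.is_le
  finish_le := j.is_le
  start := by simpa using hq0
  finish := by simpa using hqr
  avoids t ht0 htr s _ hts := by
    refine hqp t ?_ ?_ ⟨s, hts.symm⟩ <;>
      rw [Fin.natCast_eq_mk (by omega : t < r + 1)] <;> simp [Fin.ext_iff] <;> omega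

end

theorem stmt17_general {V : Type*} (G : SimpleGraph V) (a b : ℕ) (ha : 3 ≤ a)
    (ℓ : ℕ) (hl : 3 * b ≤ ℓ) (p : Fin ℓ → V) (hP : IsPathEmb G ℓ p)
    (i j : Fin ℓ) (hi1 : a ≤ (i : ℕ))
    (hj2 : (j : ℕ) + a + 1 ≤ ℓ)
    (hij : (i : ℕ) + 4 ≤ (j : ℕ))
    (hQ : ∃ (m : ℕ) (q : Fin (m + 2) → V),
      Function.Injective q ∧ q 0 = p i ∧ q (Fin.last (m + 1)) = p j ∧
      (∀ (t : ℕ) (ht : t + 1 < m + 2),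
        G.Adj (q ⟨t, Nat.lt_of_succ_lt ht⟩) (q ⟨t + 1, ht⟩)) ∧
      (∀ t : Fin (m + 2), t ≠ 0 → t ≠ Fin.last (m + 1) → q t ∉ Set.range p)) :
    ContainsSubdividedClaw G 3 a b := by
  obtain ⟨n, rfl⟩ : ∃ n, ℓ = n + 1 := ⟨ℓ - 1, by omega⟩
  obtain ⟨m, q, hq, hq0, hqL, hqa, hqP⟩ := hQ
  have hPs := hP.isPathSeq
  have hB := isBridge_natCast (G := G) ⟨hq, hqa⟩ hq0 hqL hqP
  by_cases hbi : b ≤ (i : ℕ)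
  · exact containsSubdividedClaw_of_isBridge hPs hB hbi (by omega) (by omega)
  by_cases hjb : (j : ℕ) + b + 1 ≤ n + 1
  · exact containsSubdividedClaw_of_isBridge (hPs.reflect le_rfl le_rfl) hB.reverse
      (by omega) (by omega) (by omega)
  by_cases hib : (i : ℕ) + b + 1 ≤ j
  · exact ContainsSubdividedClaw.symm <| containsSubdividedClaw_of_isBridge
      (hPs.reflect le_rfl le_rfl) hB.reverse (by omega) (by omega) (by omega)
  omega

/-- For `b ≥ a ≥ 3`: if `G` has a path `P = (p_1, …, p_ℓ)` with `ℓ ≥ 3b`, and there are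
positions `i, j` with `a+1 ≤ i, j ≤ ℓ−a` (0-indexed: `a ≤ i, j` and `i, j ≤ ℓ−a−1`),
`j ≥ i+4`, joined by a path `Q` meeting `P` only in its endpoints `p_i, p_j`, then `G`
contains `S_{3,a,b}` as a subgraph. -/
theorem stmt17 {V : Type*} (G : SimpleGraph V) (a b : ℕ) (ha : 3 ≤ a) (hab : a ≤ b)
    (ℓ : ℕ) (hl : 3 * b ≤ ℓ) (p : Fin ℓ → V) (hP : IsPathEmb G ℓ p)
    (i j : Fin ℓ) (hi1 : a ≤ (i : ℕ)) (hi2 : (i : ℕ) + a + 1 ≤ ℓ)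
    (hj1 : a ≤ (j : ℕ)) (hj2 : (j : ℕ) + a + 1 ≤ ℓ)
    (hij : (i : ℕ) + 4 ≤ (j : ℕ))
    (hQ : ∃ (m : ℕ) (q : Fin (m + 2) → V),
      Function.Injective q ∧ q 0 = p i ∧ q (Fin.last (m + 1)) = p j ∧
      (∀ (t : ℕ) (ht : t + 1 < m + 2),
        G.Adj (q ⟨t, Nat.lt_of_succ_lt ht⟩) (q ⟨t + 1, ht⟩)) ∧
      (∀ t : Fin (m + 2), t ≠ 0 → t ≠ Fin.last (m + 1) → q t ∉ Set.range p)) :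
    ContainsSubdividedClaw G 3 a b :=
  stmt17_general G a b ha ℓ hl p hP i j hi1 hj2 hij hQ
end
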